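/- arXiv:1912.12989 — 7 statements merged into one kernel-verified Lean document; each statement's English description precedes it below -/
import Mathlib

section
/- Let Γ be a finite oriented graph (possibly with identifications making it periodic) and let ψ ∈ L²(Γ). If for every circuit C in the underlying undirected graph the integral over Γ of ψ(y)·χ_C(y) ds(y) vanishes, then there exists a continuous function φ on Γ, with φ ∈ H¹ on each edge, such that ∂_Γ φ = ψ almost everywhere on Γ. -/
open MeasureTheory

/-- A finite oriented metric graph: each edge `e` is identified with the
interval `[0, len e]` via an arc-length parametrization compatible with the
orientation, running from the vertex `src e` to the vertex `tgt e`. -/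
structure OrientedMetricGraph where
  V : Type
  E : Type
  fintV : Fintype V
  decV : DecidableEq V
  fintE : Fintype E
  decE : DecidableEq E
  src : E → V
  tgt : E → V
  len : E → ℝ
  len_pos : ∀ e, 0 < len e

attribute [instance] OrientedMetricGraph.fintV OrientedMetricGraph.decV
  OrientedMetricGraph.fintE OrientedMetricGraph.decE

namespace OrientedMetricGraph

variable (G : OrientedMetricGraph)

/-- A dart is an edge together with a direction of traversal
(`true` = following the orientation of the edge). -/
abbrev Dart := G.E × Bool

/-- The vertex where the traversal of the dart starts. -/
def dartTail (d : G.Dart) : G.V := if d.2 then G.src d.1 else G.tgt d.1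

/-- The vertex where the traversal of the dart ends. -/
def dartHead (d : G.Dart) : G.V := if d.2 then G.tgt d.1 else G.src d.1

/-- The orientation function `χ` on a dart: `+1` if the edge is traversed in
accordance with the orientation of the graph and `-1` otherwise. -/
def sign (d : G.Dart) : ℝ := if d.2 then 1 else -1

/-- Value of an edgewise function at the endpoint of the edge where the
traversal of the dart ends. -/
def headVal (u : G.E → ℝ → ℝ) (d : G.Dart) : ℝ :=
  if d.2 then u d.1 (G.len d.1) else u d.1 0

/-- Value of an edgewise function at the endpoint of the edge where the
traversal of the dart starts. -/
def tailVal (u : G.E → ℝ → ℝ) (d : G.Dart) : ℝ :=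
  if d.2 then u d.1 0 else u d.1 (G.len d.1)

/-- An edgewise function is continuous on the graph: its endpoint values agree
whenever two edge-endpoints are attached to the same vertex. -/
def VertexConsistent (u : G.E → ℝ → ℝ) : Prop :=
  ∀ d₁ d₂ : G.Dart, G.dartHead d₁ = G.dartHead d₂ → G.headVal u d₁ = G.headVal u d₂

/-- A trail: a nonempty walk (consecutive darts are incident) without repeated
edges. -/
def IsTrail (T : List G.Dart) : Prop :=
  T ≠ [] ∧ T.Chain' (fun d₁ d₂ => G.dartHead d₁ = G.dartTail d₂) ∧
    (T.map Prod.fst).Nodup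

/-- A circuit: a closed trail. -/
def IsCircuit (T : List G.Dart) : Prop :=
  G.IsTrail T ∧ ∀ dl ∈ T.getLast?, ∀ df ∈ T.head?, G.dartHead dl = G.dartTail df

/-- The signed integral of an edgewise function over one dart; the sign is the
value of the orientation function on the dart. -/
noncomputable def dartIntegral (g : G.E → ℝ → ℝ) (d : G.Dart) : ℝ :=
  G.sign d * ∫ s in (0:ℝ)..(G.len d.1), g d.1 s

/-- `∫_T g χ_T ds`: integral of `g` over a trail, weighted with the
orientation function of the trail. -/
noncomputable def trailIntegral (g : G.E → ℝ → ℝ) (T : List G.Dart) : ℝ :=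
  (T.map (G.dartIntegral g)).sum

/-- Undirected adjacency of two vertices. -/
def Adj (v w : G.V) : Prop := ∃ d : G.Dart, G.dartTail d = v ∧ G.dartHead d = w

/-- Directed adjacency of two vertices. -/
def DirAdj (v w : G.V) : Prop := ∃ e : G.E, G.src e = v ∧ G.tgt e = w

end OrientedMetricGraph

/-!
Integrating `ψ` over the edges turns the problem into one about edge weights `I e = ∫₀^{len e} ψ e`.
A closed walk that is not a circuit repeats an edge; cutting there splits it into two shorter
closed walks (if the same dart occurs twice) or into two shorter closed walks plus a traversal of
the edge in both directions, which cancels. By induction on the length, the signed sum of `I`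
vanishes along every closed walk, so the signed sum along a walk from a fixed base vertex only
depends on its endpoint. This vertex potential `P` satisfies `P (tgt e) = P (src e) + I e`, and
`φ e s = P (src e) + ∫₀^s ψ e` is continuous at the vertices.
-/

theorem List.exists_eq_append_cons_append_cons_of_not_nodup_map {α β : Type*} (f : α → β)
    {l : List α} (h : ¬ (l.map f).Nodup) :
    ∃ A a B b C, l = A ++ a :: B ++ b :: C ∧ f a = f b := by
  induction l with
  | nil => simp at h
  | cons x l ih =>
    by_cases hx : f x ∈ l.map f
    · obtain ⟨b, hb, hfb⟩ := List.mem_map.mp hx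
      obtain ⟨B, C, rfl⟩ := List.append_of_mem hb
      exact ⟨[], x, B, b, C, rfl, hfb.symm⟩
    · obtain ⟨A, a, B, b, C, rfl, hab⟩ := ih fun hl => h (List.nodup_cons.mpr ⟨hx, hl⟩)
      exact ⟨x :: A, a, B, b, C, rfl, hab⟩

namespace OrientedMetricGraph

variable (G : OrientedMetricGraph)

def IsWalk : List G.Dart → G.V → G.V → Prop
  | [], v, w => v = w
  | d :: W, v, w => G.dartTail d = v ∧ IsWalk W (G.dartHead d) w

def revDart (d : G.Dart) : G.Dart := (d.1, !d.2)

def walkSum (I : G.E → ℝ) (W : List G.Dart) : ℝ :=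
  (W.map fun d => G.sign d * I d.1).sum

variable {G}

@[simp] lemma isWalk_nil {v w : G.V} : G.IsWalk [] v w ↔ v = w := Iff.rfl

@[simp] lemma isWalk_cons {d : G.Dart} {W : List G.Dart} {v w : G.V} :
    G.IsWalk (d :: W) v w ↔ G.dartTail d = v ∧ G.IsWalk W (G.dartHead d) w := Iff.rfl

lemma isWalk_append {A B : List G.Dart} {v w : G.V} :
    G.IsWalk (A ++ B) v w ↔ ∃ u, G.IsWalk A v u ∧ G.IsWalk B u w := by
  induction A generalizing v with
  | nil => simp
  | cons d A ih => simp only [List.cons_append, isWalk_cons, ih]; tauto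

lemma isWalk_singleton {d : G.Dart} : G.IsWalk [d] (G.dartTail d) (G.dartHead d) :=
  ⟨rfl, rfl⟩

lemma exists_isWalk_of_reflTransGen {v w : G.V} (h : Relation.ReflTransGen G.Adj v w) :
    ∃ W, G.IsWalk W v w := by
  induction h with
  | refl => exact ⟨[], rfl⟩
  | tail _ hadj ih =>
    obtain ⟨W, hW⟩ := ih
    obtain ⟨d, rfl, rfl⟩ := hadj
    exact ⟨W ++ [d], isWalk_append.mpr ⟨_, hW, isWalk_singleton⟩⟩

@[simp] lemma fst_revDart (d : G.Dart) : (G.revDart d).1 = d.1 := rfl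

@[simp] lemma dartTail_revDart (d : G.Dart) : G.dartTail (G.revDart d) = G.dartHead d := by
  rcases d with ⟨e, b⟩; cases b <;> simp [revDart, dartTail, dartHead]

@[simp] lemma dartHead_revDart (d : G.Dart) : G.dartHead (G.revDart d) = G.dartTail d := by
  rcases d with ⟨e, b⟩; cases b <;> simp [revDart, dartTail, dartHead]

@[simp] lemma sign_revDart (d : G.Dart) : G.sign (G.revDart d) = -G.sign d := by
  rcases d with ⟨e, b⟩; cases b <;> simp [revDart, sign]

lemma eq_or_eq_revDart_of_fst_eq {d₁ d₂ : G.Dart} (h : d₁.1 = d₂.1) :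
    d₁ = d₂ ∨ d₂ = G.revDart d₁ := by
  rcases d₁ with ⟨e, b₁⟩; rcases d₂ with ⟨e, b₂⟩
  cases h
  cases b₁ <;> cases b₂ <;> simp [revDart]

namespace IsWalk

variable {W : List G.Dart} {v w : G.V}

lemma chain' (h : G.IsWalk W v w) :
    W.IsChain fun d₁ d₂ => G.dartHead d₁ = G.dartTail d₂ := by
  induction W generalizing v with
  | nil => exact List.isChain_nil
  | cons d W ih =>
    cases W with
    | nil => exact List.isChain_singleton _
    | cons d' W => exact List.isChain_cons_cons.mpr ⟨h.2.1.symm, ih h.2⟩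

lemma dartTail_of_mem_head? (h : G.IsWalk W v w) : ∀ d ∈ W.head?, G.dartTail d = v := by
  cases W with
  | nil => simp
  | cons d W => simpa using h.1

lemma dartHead_of_mem_getLast? (h : G.IsWalk W v w) :
    ∀ d ∈ W.getLast?, G.dartHead d = w := by
  induction W generalizing v with
  | nil => simp
  | cons d W ih =>
    cases W with
    | nil => simpa using h.2
    | cons d' W => exact ih h.2

lemma isCircuit (h : G.IsWalk W v v) (hne : W ≠ []) (hnd : (W.map Prod.fst).Nodup) :
    G.IsCircuit W :=
  ⟨⟨hne, h.chain', hnd⟩, fun dl hdl df hdf => by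
    rw [h.dartHead_of_mem_getLast? dl hdl, h.dartTail_of_mem_head? df hdf]⟩

lemma reverse (h : G.IsWalk W v w) : G.IsWalk (W.map G.revDart).reverse w v := by
  induction W generalizing v with
  | nil => exact h.symm
  | cons d W ih =>
    rw [List.map_cons, List.reverse_cons, isWalk_append]
    exact ⟨_, ih h.2, by simp [h.1]⟩

end IsWalk

@[simp] lemma walkSum_nil (I : G.E → ℝ) : G.walkSum I [] = 0 := rfl

@[simp] lemma walkSum_cons (I : G.E → ℝ) (d : G.Dart) (W : List G.Dart) :
    G.walkSum I (d :: W) = G.sign d * I d.1 + G.walkSum I W := rfl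

@[simp] lemma walkSum_append (I : G.E → ℝ) (A B : List G.Dart) :
    G.walkSum I (A ++ B) = G.walkSum I A + G.walkSum I B := by
  simp [walkSum]

lemma walkSum_reverse (I : G.E → ℝ) (W : List G.Dart) :
    G.walkSum I (W.map G.revDart).reverse = -G.walkSum I W := by
  induction W with
  | nil => simp
  | cons d W ih => simp [ih]

lemma trailIntegral_eq_walkSum (g : G.E → ℝ → ℝ) (T : List G.Dart) :
    G.trailIntegral g T = G.walkSum (fun e => ∫ s in (0:ℝ)..G.len e, g e s) T := rfl

lemma exists_shorter_closed_walks (I : G.E → ℝ) {W : List G.Dart} {v : G.V}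
    (hW : G.IsWalk W v v) (hnd : ¬ (W.map Prod.fst).Nodup) :
    ∃ W₁ u₁ W₂ u₂, G.IsWalk W₁ u₁ u₁ ∧ G.IsWalk W₂ u₂ u₂ ∧
      W₁.length < W.length ∧ W₂.length < W.length ∧
      G.walkSum I W = G.walkSum I W₁ + G.walkSum I W₂ := by
  obtain ⟨A, d, B, d', C, rfl, hfst⟩ :=
    List.exists_eq_append_cons_append_cons_of_not_nodup_map Prod.fst hnd
  obtain ⟨u, hAB, htail', hC⟩ := isWalk_append.mp hW
  obtain ⟨u', hA, htail, hB⟩ := isWalk_append.mp hAB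
  subst htail htail'
  have hCA : G.IsWalk (C ++ A) (G.dartHead d') (G.dartTail d) :=
    isWalk_append.mpr ⟨v, hC, hA⟩
  simp only [List.length_append, List.length_cons]
  rcases eq_or_eq_revDart_of_fst_eq hfst with rfl | rfl
  · -- the dart `d` occurs twice: `d :: C ++ A` and `B ++ [d]` are closed
    refine ⟨d :: (C ++ A), _, B ++ [d], _, ⟨rfl, hCA⟩,
      isWalk_append.mpr ⟨_, hB, isWalk_singleton⟩, ?_, ?_, ?_⟩
    · simp only [List.length_cons, List.length_append]; omega
    · simp only [List.length_append, List.length_singleton]; omega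
    · simp only [walkSum_append, walkSum_cons, walkSum_nil]; ring
  · -- `d` is followed later by its reversal: the two traversals cancel
    refine ⟨C ++ A, _, B, _, by simpa using hCA, by simpa using hB, ?_, ?_, ?_⟩
    · simp only [List.length_append]; omega
    · omega
    · simp only [walkSum_append, walkSum_cons, sign_revDart, fst_revDart]; ring

lemma walkSum_eq_zero_of_isWalk_self (I : G.E → ℝ)
    (hcirc : ∀ C, G.IsCircuit C → G.walkSum I C = 0) {W : List G.Dart} {v : G.V}
    (hW : G.IsWalk W v v) : G.walkSum I W = 0 := by
  induction hlen : W.length using Nat.strong_induction_on generalizing W v with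
  | _ n ih =>
    by_cases hnd : (W.map Prod.fst).Nodup
    · rcases eq_or_ne W [] with rfl | hne
      · rfl
      · exact hcirc W (hW.isCircuit hne hnd)
    · obtain ⟨W₁, u₁, W₂, u₂, hW₁, hW₂, hl₁, hl₂, hsum⟩ :=
        exists_shorter_closed_walks I hW hnd
      rw [hsum, ih _ (hlen ▸ hl₁) hW₁ rfl, ih _ (hlen ▸ hl₂) hW₂ rfl, add_zero]

lemma exists_vertex_potential (hconn : ∀ v w : G.V, Relation.ReflTransGen G.Adj v w)
    (I : G.E → ℝ) (hcirc : ∀ C, G.IsCircuit C → G.walkSum I C = 0) :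
    ∃ P : G.V → ℝ, ∀ e, P (G.tgt e) = P (G.src e) + I e := by
  rcases isEmpty_or_nonempty G.V with hV | ⟨⟨v₀⟩⟩
  · exact ⟨0, fun e => isEmptyElim (G.src e)⟩
  choose W hW using fun v => exists_isWalk_of_reflTransGen (hconn v₀ v)
  refine ⟨fun v => G.walkSum I (W v), fun e => ?_⟩
  have hloop : G.IsWalk (W (G.src e) ++ [(e, true)] ++ ((W (G.tgt e)).map G.revDart).reverse)
      v₀ v₀ :=
    isWalk_append.mpr ⟨_, isWalk_append.mpr ⟨_, hW _, isWalk_singleton⟩, (hW _).reverse⟩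
  have := walkSum_eq_zero_of_isWalk_self I hcirc hloop
  simp only [walkSum_append, walkSum_reverse, walkSum_cons, walkSum_nil, sign, if_true] at this
  linarith

lemma headVal_eq (P : G.V → ℝ) (g : G.E → ℝ → ℝ)
    (hP : ∀ e, P (G.tgt e) = P (G.src e) + ∫ s in (0:ℝ)..G.len e, g e s) (d : G.Dart) :
    G.headVal (fun e s => P (G.src e) + ∫ t in (0:ℝ)..s, g e t) d = P (G.dartHead d) := by
  rcases d with ⟨e, _ | _⟩ <;> simp [headVal, dartHead, hP]

end OrientedMetricGraph

theorem exists_potential_of_circuit_integrals_vanish_general (G : OrientedMetricGraph)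
    (hconn : ∀ v w : G.V, Relation.ReflTransGen G.Adj v w)
    (ψ : G.E → ℝ → ℝ)
    (hcirc : ∀ C : List G.Dart, G.IsCircuit C → G.trailIntegral ψ C = 0) :
    ∃ φ : G.E → ℝ → ℝ, G.VertexConsistent φ ∧
      ∀ e, ∀ s ∈ Set.Icc (0:ℝ) (G.len e),
        φ e s = φ e 0 + ∫ t in (0:ℝ)..s, ψ e t := by
  obtain ⟨P, hP⟩ := G.exists_vertex_potential hconn _ fun C hC =>
    (G.trailIntegral_eq_walkSum ψ C).symm.trans (hcirc C hC)
  refine ⟨fun e s => P (G.src e) + ∫ t in (0:ℝ)..s, ψ e t, fun d₁ d₂ h => ?_, fun e s _ => ?_⟩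
  · rw [G.headVal_eq P ψ hP, G.headVal_eq P ψ hP, h]
  · simp

/-- If `ψ ∈ L²(Γ)` has vanishing weighted integral
`∫_Γ ψ χ_C ds = 0` along every circuit `C` of (the undirected version of) a
connected finite oriented metric graph `Γ`, then `ψ` admits a potential: a
function `φ`, continuous on the graph and `H¹` on each edge, with
`∂_Γ φ = ψ` almost everywhere (expressed by the integral representation
`φ e s = φ e 0 + ∫₀^s ψ e`). -/
theorem exists_potential_of_circuit_integrals_vanish (G : OrientedMetricGraph)
    (hconn : ∀ v w : G.V, Relation.ReflTransGen G.Adj v w)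
    (ψ : G.E → ℝ → ℝ)
    (hint : ∀ e, IntervalIntegrable (ψ e) MeasureTheory.volume 0 (G.len e))
    (hL2 : ∀ e, MeasureTheory.MemLp (ψ e) 2
      (MeasureTheory.volume.restrict (Set.Ioc (0:ℝ) (G.len e))))
    (hcirc : ∀ C : List G.Dart, G.IsCircuit C → G.trailIntegral ψ C = 0) :
    ∃ φ : G.E → ℝ → ℝ, G.VertexConsistent φ ∧
      ∀ e, ∀ s ∈ Set.Icc (0:ℝ) (G.len e),
        φ e s = φ e 0 + ∫ t in (0:ℝ)..s, ψ e t :=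
  exists_potential_of_circuit_integrals_vanish_general G hconn ψ hcirc
end

section
/- Let φ ∈ (H¹_♯(Γ_Y))² be any solution of the canonical cell problem. Then the homogenized matrix A_hom := (1/|Γ_Y|) ∫_{Γ_Y} (t(y) + ∂_Γφ(y)) (t(y) + ∂_Γφ(y))ᵀ ds(y) is a symmetric, positive definite 2×2 matrix, provided the unit-cell graph Γ_Y is connected and there exist points y₁, y₂ ∈ Γ_Y with y₁ + e₁ ∈ Γ_Y and y₂ + e₂ ∈ Γ_Y (connectivity of the mesh to its horizontal and vertical translates). -/
open MeasureTheory

/-- An `H¹` function on an oriented metric graph: edgewise absolutely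
continuous with square-integrable edge derivative `dval`, and continuous at
the vertices of the graph. -/
structure H1Fun (G : OrientedMetricGraph) where
  val : G.E → ℝ → ℝ
  dval : G.E → ℝ → ℝ
  repr : ∀ e, ∀ s ∈ Set.Icc (0:ℝ) (G.len e),
    val e s = val e 0 + ∫ t in (0:ℝ)..s, dval e t
  dval_int : ∀ e, IntervalIntegrable (dval e) MeasureTheory.volume 0 (G.len e)
  dval_L2 : ∀ e, MeasureTheory.MemLp (dval e) 2
    (MeasureTheory.volume.restrict (Set.Ioc (0:ℝ) (G.len e)))
  consistent : G.VertexConsistent val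

/-- The unit-cell graph `Γ_Y`: an oriented metric graph together with an
arc-length (`W^{1,∞}`) parametrization `emb` of each edge into the plane,
with unit tangent field `tang`. For the periodic graph `Γ_{Y,♯}` the vertex
identifications of opposite boundary points are part of the combinatorial
data (`src`/`tgt`), while the embeddings of identified endpoints may differ
by integer translations. -/
structure CellGraph extends OrientedMetricGraph where
  emb : E → ℝ → ℝ × ℝ
  tang : E → ℝ → ℝ × ℝ
  emb_rep : ∀ e, ∀ s ∈ Set.Icc (0:ℝ) (len e),
    emb e s = emb e 0 + ∫ t in (0:ℝ)..s, tang e t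
  tang_int : ∀ e, IntervalIntegrable (tang e) MeasureTheory.volume 0 (len e)
  tang_unit : ∀ e, ∀ᵐ s ∂(MeasureTheory.volume.restrict (Set.Ioc (0:ℝ) (len e))),
    ‖tang e s‖ = 1

namespace CellGraph

variable (G : CellGraph)

/-- The `i`-th component of the unit tangent field. -/
noncomputable def tangComp (i : Fin 2) (e : G.E) (s : ℝ) : ℝ :=
  if i = 0 then (G.tang e s).1 else (G.tang e s).2

/-- The canonical cell problem: `φ = (φ₀, φ₁) ∈ (H¹_♯(Γ_Y))²` satisfies
`∫_{Γ_Y} ∂_Γφ_i ∂_Γψ ds = -∫_{Γ_Y} t_i ∂_Γψ ds` for every periodic test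
function `ψ ∈ H¹_♯(Γ_Y)`. -/
def SolvesCanonical (φ : Fin 2 → H1Fun G.toOrientedMetricGraph) : Prop :=
  ∀ i : Fin 2, ∀ ψ : H1Fun G.toOrientedMetricGraph,
    (∑ e : G.E, ∫ s in (0:ℝ)..(G.len e), (φ i).dval e s * ψ.dval e s)
      = - ∑ e : G.E, ∫ s in (0:ℝ)..(G.len e), G.tangComp i e s * ψ.dval e s

/-- Total length `|Γ_Y|` of the unit-cell graph. -/
noncomputable def totalLen : ℝ := ∑ e : G.E, G.len e

/-- The homogenized tensor
`A_hom = (1/|Γ_Y|) ∫_{Γ_Y} (t + ∂_Γφ)(t + ∂_Γφ)ᵀ ds`. -/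
noncomputable def Ahom (φ : Fin 2 → H1Fun G.toOrientedMetricGraph) :
    Matrix (Fin 2) (Fin 2) ℝ :=
  Matrix.of fun i j =>
    (∑ e : G.E, ∫ s in (0:ℝ)..(G.len e),
      (G.tangComp i e s + (φ i).dval e s) * (G.tangComp j e s + (φ j).dval e s))
      / G.totalLen

/-- Geometric displacement of a walk: the signed sum of the differences of the
embedded endpoints of its darts. -/
noncomputable def disp (T : List G.Dart) : ℝ × ℝ :=
  (T.map fun d => G.sign d • (G.emb d.1 (G.len d.1) - G.emb d.1 0)).sum

/-- The circuit tangent vector `t_C = ∫_{Γ_Y} t χ_C ds`. -/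
noncomputable def circTang (C : List G.Dart) : ℝ × ℝ :=
  (C.map fun d => G.sign d • (∫ s in (0:ℝ)..(G.len d.1), G.tang d.1 s)).sum

end CellGraph

/-!
If `ξᵀ A_hom ξ = 0`, then `ξ · (t + ∂_Γφ)` vanishes almost everywhere on every edge, so its
integral along any circuit vanishes. Along a circuit, `∂_Γφ` integrates to zero because the
endpoint values of `φ` telescope by continuity at the vertices, while `t` integrates to the
geometric displacement of the circuit. The circuits with displacements `e₁` and `e₂` therefore
give `ξ₁ = ξ₂ = 0`.
-/

open scoped Matrix

section IntervalIntegral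

variable {a b : ℝ}

theorem intervalIntegrable_mul_of_memLp_two (hab : a ≤ b) {u v : ℝ → ℝ}
    (hu : MemLp u 2 (volume.restrict (Set.Ioc a b)))
    (hv : MemLp v 2 (volume.restrict (Set.Ioc a b))) :
    IntervalIntegrable (fun s => u s * v s) volume a b :=
  (intervalIntegrable_iff_integrableOn_Ioc_of_le hab).2 (hu.integrable_mul hv)

theorem intervalIntegrable_of_memLp (hab : a ≤ b) {p : ENNReal} (hp : 1 ≤ p) {u : ℝ → ℝ}
    (hu : MemLp u p (volume.restrict (Set.Ioc a b))) : IntervalIntegrable u volume a b :=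
  (intervalIntegrable_iff_integrableOn_Ioc_of_le hab).2 (hu.integrable hp)

theorem intervalIntegral_eq_zero_of_integral_sq_eq_zero (hab : a ≤ b) {f : ℝ → ℝ}
    (hf : IntervalIntegrable (fun s => f s ^ 2) volume a b)
    (h : ∫ s in a..b, f s ^ 2 = 0) : ∫ s in a..b, f s = 0 := by
  have hf0 : f =ᵐ[volume.restrict (Set.Ioc a b)] 0 := by
    filter_upwards [(intervalIntegral.integral_eq_zero_iff_of_le_of_nonneg_ae hab
      (ae_of_all _ fun s => sq_nonneg (f s)) hf).1 h] with s hs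
    exact pow_eq_zero_iff two_ne_zero |>.1 hs
  rw [intervalIntegral.integral_of_le hab, integral_eq_zero_of_ae hf0]

theorem dotProduct_mulVec_intervalIntegral_gram {ι n : Type*} [Fintype ι] [Fintype n]
    (a b : ι → ℝ) (g : n → ι → ℝ → ℝ)
    (hg : ∀ i j k, IntervalIntegrable (fun s => g i k s * g j k s) volume (a k) (b k))
    (x : n → ℝ) :
    x ⬝ᵥ (Matrix.of (fun i j => ∑ k, ∫ s in a k..b k, g i k s * g j k s) *ᵥ x)
      = ∑ k, ∫ s in a k..b k, (∑ i, x i * g i k s) ^ 2 := by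
  have hsq : ∀ k s, (∑ i, x i * g i k s) ^ 2
      = ∑ i, ∑ j, x i * x j * (g i k s * g j k s) := by
    intro k s
    rw [sq, Finset.sum_mul_sum]
    exact Finset.sum_congr rfl fun i _ => Finset.sum_congr rfl fun j _ => by ring
  have hint : ∀ k, ∫ s in a k..b k, (∑ i, x i * g i k s) ^ 2
      = ∑ i, ∑ j, x i * x j * ∫ s in a k..b k, g i k s * g j k s := by
    intro k
    have hrow : ∀ i, IntervalIntegrable (fun s => ∑ j, x i * x j * (g i k s * g j k s))
        volume (a k) (b k) := fun i => by
      simpa only [Finset.sum_fn] using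
        IntervalIntegrable.sum Finset.univ fun j _ => (hg i j k).const_mul (x i * x j)
    simp_rw [hsq, intervalIntegral.integral_finsetSum fun i _ => hrow i]
    refine Finset.sum_congr rfl fun i _ => ?_
    rw [intervalIntegral.integral_finsetSum fun j _ => (hg i j k).const_mul _]
    simp_rw [intervalIntegral.integral_const_mul]
  simp only [hint, dotProduct, Matrix.mulVec, Matrix.of_apply, Finset.mul_sum, Finset.sum_mul]
  conv_rhs => rw [Finset.sum_comm]
  refine Finset.sum_congr rfl fun i _ => ?_
  conv_rhs => rw [Finset.sum_comm]
  exact Finset.sum_congr rfl fun j _ => Finset.sum_congr rfl fun k _ => by ring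

end IntervalIntegral

namespace OrientedMetricGraph

variable (G : OrientedMetricGraph)

theorem headVal_eq_tailVal {u : G.E → ℝ → ℝ} (hu : G.VertexConsistent u) {d₁ d₂ : G.Dart}
    (h : G.dartHead d₁ = G.dartTail d₂) : G.headVal u d₁ = G.tailVal u d₂ := by
  obtain ⟨e, b⟩ := d₂
  have hrev : G.dartTail (e, b) = G.dartHead (e, !b) := by
    cases b <;> simp [dartTail, dartHead]
  have hval : G.tailVal u (e, b) = G.headVal u (e, !b) := by
    cases b <;> simp [tailVal, headVal]
  rw [hval]
  exact hu _ _ (h.trans hrev)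

theorem sum_map_headVal_sub_tailVal {u : G.E → ℝ → ℝ} (hu : G.VertexConsistent u) :
    ∀ (d : G.Dart) (T : List G.Dart),
      (d :: T).IsChain (fun d₁ d₂ => G.dartHead d₁ = G.dartTail d₂) →
      ((d :: T).map fun d' => G.headVal u d' - G.tailVal u d').sum
        = G.headVal u ((d :: T).getLast (List.cons_ne_nil d T)) - G.tailVal u d
  | d, [], _ => by simp
  | d, d' :: T, hT => by
    rw [List.isChain_cons_cons] at hT
    rw [List.map_cons, List.sum_cons, sum_map_headVal_sub_tailVal hu d' T hT.2,
      List.getLast_cons (List.cons_ne_nil d' T), G.headVal_eq_tailVal hu hT.1]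
    ring

variable {G}

theorem dartIntegral_add {f g : G.E → ℝ → ℝ}
    (hf : ∀ e, IntervalIntegrable (f e) volume 0 (G.len e))
    (hg : ∀ e, IntervalIntegrable (g e) volume 0 (G.len e)) (d : G.Dart) :
    G.dartIntegral (f + g) d = G.dartIntegral f d + G.dartIntegral g d := by
  simp only [dartIntegral, Pi.add_apply, intervalIntegral.integral_add (hf d.1) (hg d.1)]
  ring

theorem trailIntegral_add {f g : G.E → ℝ → ℝ}
    (hf : ∀ e, IntervalIntegrable (f e) volume 0 (G.len e))
    (hg : ∀ e, IntervalIntegrable (g e) volume 0 (G.len e)) (T : List G.Dart) :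
    G.trailIntegral (f + g) T = G.trailIntegral f T + G.trailIntegral g T := by
  rw [trailIntegral, funext (dartIntegral_add hf hg), List.sum_map_add]
  rfl

theorem dartIntegral_const_smul (c : ℝ) (f : G.E → ℝ → ℝ) (d : G.Dart) :
    G.dartIntegral (c • f) d = c * G.dartIntegral f d := by
  simp only [dartIntegral, Pi.smul_apply, smul_eq_mul, intervalIntegral.integral_const_mul]
  ring

theorem trailIntegral_const_smul (c : ℝ) (f : G.E → ℝ → ℝ) (T : List G.Dart) :
    G.trailIntegral (c • f) T = c * G.trailIntegral f T := by
  rw [trailIntegral, funext (dartIntegral_const_smul c f), List.sum_map_mul_left]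
  rfl

theorem trailIntegral_eq_zero_of_sum_integral_sq_eq_zero {f : G.E → ℝ → ℝ}
    (hf : ∀ e, IntervalIntegrable (fun s => f e s ^ 2) volume 0 (G.len e))
    (h : ∑ e, ∫ s in (0:ℝ)..G.len e, f e s ^ 2 = 0) (T : List G.Dart) :
    G.trailIntegral f T = 0 := by
  have hsq : ∀ e, ∫ s in (0:ℝ)..G.len e, f e s ^ 2 = 0 :=
    fun e => (Finset.sum_eq_zero_iff_of_nonneg fun e _ => intervalIntegral.integral_nonneg
      (G.len_pos e).le fun s _ => sq_nonneg (f e s)).1 h e (Finset.mem_univ e)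
  refine List.sum_eq_zero fun _ hy => ?_
  obtain ⟨d, -, rfl⟩ := List.mem_map.1 hy
  rw [dartIntegral, intervalIntegral_eq_zero_of_integral_sq_eq_zero (G.len_pos d.1).le
    (hf d.1) (hsq d.1), mul_zero]

end OrientedMetricGraph

namespace H1Fun

open OrientedMetricGraph

variable {G : OrientedMetricGraph}

theorem dartIntegral_dval (ψ : H1Fun G) (d : G.Dart) :
    G.dartIntegral ψ.dval d = G.headVal ψ.val d - G.tailVal ψ.val d := by
  have hFTC : ∫ s in (0:ℝ)..G.len d.1, ψ.dval d.1 s = ψ.val d.1 (G.len d.1) - ψ.val d.1 0 := by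
    rw [ψ.repr d.1 (G.len d.1) ⟨(G.len_pos d.1).le, le_rfl⟩]
    ring
  obtain ⟨e, b⟩ := d
  cases b <;> simp only [dartIntegral, sign, headVal, tailVal, hFTC] <;> simp

theorem trailIntegral_dval_eq_zero (ψ : H1Fun G) {C : List G.Dart} (hC : G.IsCircuit C) :
    G.trailIntegral ψ.dval C = 0 := by
  obtain ⟨⟨hne, hchain, -⟩, hclosed⟩ := hC
  obtain ⟨d, T, rfl⟩ := List.exists_cons_of_ne_nil hne
  have hlast := hclosed _ (List.getLast?_eq_some_getLast (List.cons_ne_nil d T)) d rfl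
  rw [trailIntegral, List.map_congr_left fun d' _ => ψ.dartIntegral_dval d',
    G.sum_map_headVal_sub_tailVal ψ.consistent d T hchain,
    G.headVal_eq_tailVal ψ.consistent hlast, sub_self]

end H1Fun

namespace CellGraph

open OrientedMetricGraph

variable (G : CellGraph)

theorem tangComp_memLp (i : Fin 2) (e : G.E) :
    MemLp (G.tangComp i e) 2 (volume.restrict (Set.Ioc (0:ℝ) (G.len e))) := by
  have htang : AEStronglyMeasurable (G.tang e) (volume.restrict (Set.Ioc (0:ℝ) (G.len e))) :=
    ((intervalIntegrable_iff_integrableOn_Ioc_of_le (G.len_pos e).le).1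
      (G.tang_int e)).aestronglyMeasurable
  refine MemLp.of_bound ?_ 1 ?_
  · unfold tangComp
    split
    · exact continuous_fst.comp_aestronglyMeasurable htang
    · exact continuous_snd.comp_aestronglyMeasurable htang
  · filter_upwards [G.tang_unit e] with s hs
    unfold tangComp
    split
    · exact (norm_fst_le _).trans hs.le
    · exact (norm_snd_le _).trans hs.le

theorem dartIntegral_tangComp (i : Fin 2) (d : G.Dart) :
    G.dartIntegral (G.tangComp i) d
      = if i = 0 then (G.sign d • (G.emb d.1 (G.len d.1) - G.emb d.1 0)).1
        else (G.sign d • (G.emb d.1 (G.len d.1) - G.emb d.1 0)).2 := by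
  have hFTC : ∫ s in (0:ℝ)..G.len d.1, G.tang d.1 s = G.emb d.1 (G.len d.1) - G.emb d.1 0 := by
    rw [G.emb_rep d.1 (G.len d.1) ⟨(G.len_pos d.1).le, le_rfl⟩]
    abel
  unfold dartIntegral tangComp
  split
  · rw [← hFTC, Prod.smul_fst, smul_eq_mul]
    exact congrArg (G.sign d * ·)
      ((ContinuousLinearMap.fst ℝ ℝ ℝ).intervalIntegral_comp_comm (G.tang_int d.1))
  · rw [← hFTC, Prod.smul_snd, smul_eq_mul]
    exact congrArg (G.sign d * ·)
      ((ContinuousLinearMap.snd ℝ ℝ ℝ).intervalIntegral_comp_comm (G.tang_int d.1))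

theorem trailIntegral_tangComp (i : Fin 2) (T : List G.Dart) :
    G.trailIntegral (G.tangComp i) T = if i = 0 then (G.disp T).1 else (G.disp T).2 := by
  rw [trailIntegral, funext (G.dartIntegral_tangComp i), disp]
  split
  · rw [← AddMonoidHom.coe_fst, map_list_sum, List.map_map]
    rfl
  · rw [← AddMonoidHom.coe_snd, map_list_sum, List.map_map]
    rfl

variable (φ : Fin 2 → H1Fun G.toOrientedMetricGraph)

/-- The field `t + ∂_Γφ` whose Gram matrix is `|Γ_Y| A_hom`. -/
noncomputable def correctedTangent (i : Fin 2) : G.E → ℝ → ℝ :=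
  G.tangComp i + (φ i).dval

theorem correctedTangent_memLp (i : Fin 2) (e : G.E) :
    MemLp (G.correctedTangent φ i e) 2 (volume.restrict (Set.Ioc (0:ℝ) (G.len e))) :=
  (G.tangComp_memLp i e).add ((φ i).dval_L2 e)

theorem sum_correctedTangent_sq_intervalIntegrable (x : Fin 2 → ℝ) (e : G.E) :
    IntervalIntegrable (fun s => (∑ i, x i * G.correctedTangent φ i e s) ^ 2)
      volume 0 (G.len e) := by
  have hmem := memLp_finsetSum Finset.univ fun i _ =>
    (G.correctedTangent_memLp φ i e).const_mul (x i)
  simpa only [sq] using intervalIntegrable_mul_of_memLp_two (G.len_pos e).le hmem hmem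

theorem Ahom_isSymm : (G.Ahom φ).IsSymm :=
  Matrix.ext fun i j => by
    simp only [Matrix.transpose_apply, Ahom, Matrix.of_apply, mul_comm]

theorem dotProduct_Ahom_mulVec (x : Fin 2 → ℝ) :
    x ⬝ᵥ (G.Ahom φ *ᵥ x)
      = G.totalLen⁻¹ * ∑ e, ∫ s in (0:ℝ)..G.len e, (∑ i, x i * G.correctedTangent φ i e s) ^ 2 := by
  have hAhom : G.Ahom φ = G.totalLen⁻¹ • Matrix.of fun i j =>
      ∑ e, ∫ s in (0:ℝ)..G.len e, G.correctedTangent φ i e s * G.correctedTangent φ j e s := by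
    ext i j
    simp only [Ahom, Matrix.of_apply, Matrix.smul_apply, smul_eq_mul, div_eq_inv_mul]
    rfl
  rw [hAhom, Matrix.smul_mulVec, dotProduct_smul, smul_eq_mul,
    dotProduct_mulVec_intervalIntegral_gram _ _ _ fun i j e =>
      intervalIntegrable_mul_of_memLp_two (G.len_pos e).le
        (G.correctedTangent_memLp φ i e) (G.correctedTangent_memLp φ j e)]

theorem trailIntegral_correctedTangent_of_isCircuit {C : List G.Dart} (hC : G.IsCircuit C)
    (x : Fin 2 → ℝ) :
    G.trailIntegral (fun e s => ∑ i, x i * G.correctedTangent φ i e s) C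
      = x 0 * (G.disp C).1 + x 1 * (G.disp C).2 := by
  have htang : ∀ i e, IntervalIntegrable (G.tangComp i e) volume 0 (G.len e) :=
    fun i e => intervalIntegrable_of_memLp (G.len_pos e).le one_le_two (G.tangComp_memLp i e)
  have hcirc : ∀ i, G.trailIntegral (G.correctedTangent φ i) C
      = if i = 0 then (G.disp C).1 else (G.disp C).2 := fun i => by
    rw [correctedTangent, trailIntegral_add (htang i) (φ i).dval_int,
      (φ i).trailIntegral_dval_eq_zero hC, add_zero, trailIntegral_tangComp]
  have hct : ∀ i e, IntervalIntegrable (G.correctedTangent φ i e) volume 0 (G.len e) :=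
    fun i e => (htang i e).add ((φ i).dval_int e)
  have hsum : (fun e s => ∑ i, x i * G.correctedTangent φ i e s)
      = x 0 • G.correctedTangent φ 0 + x 1 • G.correctedTangent φ 1 := by
    ext e s
    simp [Fin.sum_univ_two]
  rw [hsum, trailIntegral_add (f := x 0 • _) (g := x 1 • _)
    (fun e => (hct 0 e).const_mul (x 0)) (fun e => (hct 1 e).const_mul (x 1)),
    trailIntegral_const_smul, trailIntegral_const_smul,
    hcirc, hcirc]
  simp

theorem totalLen_pos [Nonempty G.E] : 0 < G.totalLen :=
  Finset.sum_pos (fun e _ => G.len_pos e) Finset.univ_nonempty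

end CellGraph

theorem Ahom_isSymm_posDef_general (G : CellGraph)
    (hper : ∀ i : Fin 2, ∃ C : List G.Dart, G.IsCircuit C ∧
      G.disp C = (if i = 0 then (((1:ℝ), (0:ℝ)) : ℝ × ℝ) else ((0:ℝ), (1:ℝ))))
    (φ : Fin 2 → H1Fun G.toOrientedMetricGraph) :
    (G.Ahom φ).IsSymm ∧ (G.Ahom φ).PosDef := by
  obtain ⟨C₀, hC₀, hdisp₀⟩ := hper 0
  obtain ⟨C₁, hC₁, hdisp₁⟩ := hper 1
  have : Nonempty G.E := ⟨(C₀.head hC₀.1.1).1⟩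
  refine ⟨G.Ahom_isSymm φ, Matrix.posDef_iff_dotProduct_mulVec.2
    ⟨Matrix.isHermitian_iff_isSymm.2 (G.Ahom_isSymm φ), fun x hx => ?_⟩⟩
  rw [star_trivial, G.dotProduct_Ahom_mulVec]
  refine mul_pos (inv_pos.2 G.totalLen_pos) ((Finset.sum_nonneg fun e _ =>
    intervalIntegral.integral_nonneg (G.len_pos e).le fun s _ => sq_nonneg _).lt_of_ne
      fun hzero => hx ?_)
  have hcirc : ∀ C, G.IsCircuit C → x 0 * (G.disp C).1 + x 1 * (G.disp C).2 = 0 :=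
    fun C hC => (G.trailIntegral_correctedTangent_of_isCircuit φ hC x).symm.trans
      (G.trailIntegral_eq_zero_of_sum_integral_sq_eq_zero
        (G.sum_correctedTangent_sq_intervalIntegrable φ x) hzero.symm C)
  have h₀ := hcirc C₀ hC₀
  have h₁ := hcirc C₁ hC₁
  norm_num [hdisp₀, hdisp₁] at h₀ h₁
  ext i
  fin_cases i <;> simp [h₀, h₁]

/-- For any solution `φ` of the canonical cell problem, the
homogenized matrix `A_hom = (1/|Γ_Y|) ∫ (t+∂_Γφ)(t+∂_Γφ)ᵀ ds` is symmetric
and positive definite, provided `Γ_Y` is connected and is connected to its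
horizontal and vertical translates (there are circuits of the periodic graph
whose geometric displacement is `e₁` resp. `e₂`). -/
theorem Ahom_isSymm_posDef (G : CellGraph)
    (hconn : ∀ v w : G.V, Relation.ReflTransGen G.toOrientedMetricGraph.Adj v w)
    (hper : ∀ i : Fin 2, ∃ C : List G.Dart, G.IsCircuit C ∧
      G.disp C = (if i = 0 then (((1:ℝ), (0:ℝ)) : ℝ × ℝ) else ((0:ℝ), (1:ℝ))))
    (φ : Fin 2 → H1Fun G.toOrientedMetricGraph) (hφ : G.SolvesCanonical φ) :
    (G.Ahom φ).IsSymm ∧ (G.Ahom φ).PosDef :=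
  Ahom_isSymm_posDef_general G hper φ
end

section
/- A function φ = (φ₁,φ₂) ∈ (H¹_♯(Γ_Y))² solves the canonical cell problem if and only if (i) for each edge with arc-length parametrization γ_i on [0,ℓ_i], the map s ↦ φ(γ_i(s)) + γ_i(s) is affine, and (ii) at every vertex v_j the Kirchhoff junction condition holds: the sum of (φ∘γ_i + γ_i)′(ℓ_i) over edges ending at v_j minus the sum of (φ∘γ_i + γ_i)′(0) over edges starting at v_j equals zero. -/
open MeasureTheory

/-!
Write `F_i = t_i + ∂_Γφ_i` on each edge; the cell problem says that `F_i` is orthogonal to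
`∂_Γψ` for every `ψ ∈ H¹_♯(Γ_Y)`. Testing with primitives of mean-zero functions on a single
edge shows that `F_i` is a.e. constant on every edge, which by the Lebesgue differentiation
theorem is the same as `φ_i ∘ γ_e + γ_{e,i}` being affine. For edgewise constant `F = b_e` the
weak form reduces to `∑_e b_e (ψ(tgt e) - ψ(src e)) = 0`, and since the vertex values of `ψ` are
arbitrary (take the piecewise affine interpolant), this is the Kirchhoff condition.
-/

open Set

theorem ae_restrict_Ioc_eq_const_iff_integral_eq_smul {E : Type*} [NormedAddCommGroup E]
    [NormedSpace ℝ E] [CompleteSpace E] {f : ℝ → E} {L : ℝ} {c : E}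
    (hf : IntervalIntegrable f volume 0 L) :
    (∀ᵐ s ∂volume.restrict (Ioc 0 L), f s = c) ↔
      ∀ s ∈ Icc 0 L, ∫ t in (0:ℝ)..s, f t = s • c := by
  constructor
  · intro hc s hs
    calc ∫ t in (0:ℝ)..s, f t = ∫ _ in (0:ℝ)..s, c := by
          refine intervalIntegral.integral_congr_ae ?_
          rw [uIoc_of_le hs.1]
          exact (ae_restrict_iff' measurableSet_Ioc).mp
            (ae_restrict_of_ae_restrict_of_subset (Ioc_subset_Ioc le_rfl hs.2) hc)
      _ = s • c := by simp
  · intro hlin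
    rw [Measure.restrict_congr_set Ioo_ae_eq_Ioc.symm, ae_restrict_iff' measurableSet_Ioo]
    filter_upwards [hf.ae_hasDerivAt_integral] with x hderiv hx
    have hxL : x ∈ uIcc 0 L := Ioo_subset_Icc_self.trans Icc_subset_uIcc hx
    have hprim : (fun y => ∫ t in (0:ℝ)..y, f t) =ᶠ[nhds x] fun y => y • c :=
      Filter.eventually_of_mem (Ioo_mem_nhds hx.1 hx.2) fun y hy => hlin y (Ioo_subset_Icc_self hy)
    have hlinDeriv : HasDerivAt (fun y : ℝ => y • c) c x := by
      simpa using (hasDerivAt_id x).smul_const c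
    exact ((hderiv hxL 0 left_mem_uIcc).congr_of_eventuallyEq hprim.symm).unique hlinDeriv

theorem ae_eq_average_of_forall_integral_mul_eq_zero {α : Type*} [MeasurableSpace α]
    {μ : Measure α} [IsFiniteMeasure μ] {f : α → ℝ} (hf : MemLp f 2 μ)
    (horth : ∀ g : α → ℝ, MemLp g 2 μ → ∫ x, g x ∂μ = 0 → ∫ x, f x * g x ∂μ = 0) :
    f =ᵐ[μ] fun _ => ⨍ x, f x ∂μ := by
  set g : α → ℝ := fun x => f x - ⨍ x, f x ∂μ
  have hg : MemLp g 2 μ := hf.sub (memLp_const _)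
  have hg_mean : ∫ x, g x ∂μ = 0 := integral_sub_average μ f
  have hgg : ∫ x, g x * g x ∂μ = 0 := by
    calc ∫ x, g x * g x ∂μ = ∫ x, f x * g x - (⨍ x, f x ∂μ) * g x ∂μ := by
          simp only [g, sub_mul]
      _ = ∫ x, f x * g x ∂μ - ∫ x, (⨍ x, f x ∂μ) * g x ∂μ :=
          integral_sub (hf.integrable_mul hg) ((memLp_const (p := 2) _).integrable_mul hg)
      _ = 0 := by rw [horth g hg hg_mean, integral_const_mul, hg_mean, mul_zero, sub_zero]
  have hsq : (fun x => g x * g x) =ᵐ[μ] 0 :=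
    (integral_eq_zero_iff_of_nonneg (fun x => mul_self_nonneg (g x)) (hg.integrable_mul hg)).mp hgg
  filter_upwards [hsq] with x hx
  exact sub_eq_zero.mp (mul_self_eq_zero.mp hx)

noncomputable def pairCoord (i : Fin 2) : ℝ × ℝ →L[ℝ] ℝ :=
  if i = 0 then ContinuousLinearMap.fst ℝ ℝ ℝ else ContinuousLinearMap.snd ℝ ℝ ℝ

@[simp]
theorem pairCoord_zero (p : ℝ × ℝ) : pairCoord 0 p = p.1 := rfl

@[simp]
theorem pairCoord_one (p : ℝ × ℝ) : pairCoord 1 p = p.2 := rfl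

theorem Prod.ext_iff_pairCoord {p q : ℝ × ℝ} : p = q ↔ ∀ i, pairCoord i p = pairCoord i q := by
  simp [Prod.ext_iff, Fin.forall_fin_two]

namespace OrientedMetricGraph

variable (G : OrientedMetricGraph) {M N : Type*} [AddCommGroup M] [AddCommGroup N]

def netInflow (c : G.E → M) (v : G.V) : M :=
  (∑ e : G.E, if G.tgt e = v then c e else 0) - (∑ e : G.E, if G.src e = v then c e else 0)

def IsKirchhoff (c : G.E → M) : Prop := ∀ v, G.netInflow c v = 0

variable {G}

theorem map_netInflow {F : Type*} [FunLike F M N] [AddMonoidHomClass F M N] (f : F)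
    (c : G.E → M) (v : G.V) : f (G.netInflow c v) = G.netInflow (fun e => f (c e)) v := by
  simp only [netInflow, map_sub, map_sum, apply_ite f, map_zero]

theorem sum_mul_sub_eq_sum_netInflow (c : G.E → ℝ) (Ψ : G.V → ℝ) :
    ∑ e : G.E, c e * (Ψ (G.tgt e) - Ψ (G.src e)) = ∑ v : G.V, Ψ v * G.netInflow c v := by
  have hfiber : ∀ w : G.E → G.V,
      ∑ e : G.E, c e * Ψ (w e) = ∑ v : G.V, Ψ v * ∑ e : G.E, if w e = v then c e else 0 := by
    intro w
    rw [← Finset.sum_fiberwise Finset.univ w]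
    refine Finset.sum_congr rfl fun v _ => ?_
    rw [Finset.sum_filter, Finset.mul_sum]
    refine Finset.sum_congr rfl fun e _ => ?_
    split_ifs with h
    · rw [h, mul_comm]
    · rw [mul_zero]
  simp only [mul_sub, Finset.sum_sub_distrib, hfiber, netInflow]

theorem isKirchhoff_iff_forall_sum_mul_sub_eq_zero (c : G.E → ℝ) :
    G.IsKirchhoff c ↔ ∀ Ψ : G.V → ℝ, ∑ e : G.E, c e * (Ψ (G.tgt e) - Ψ (G.src e)) = 0 := by
  simp only [sum_mul_sub_eq_sum_netInflow]
  constructor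
  · intro hc Ψ
    simp [hc _]
  · intro h v
    simpa [Finset.sum_ite_eq'] using h fun w => if w = v then 1 else 0

theorem isKirchhoff_iff_pairCoord (c : G.E → ℝ × ℝ) :
    G.IsKirchhoff c ↔ ∀ i, G.IsKirchhoff fun e => pairCoord i (c e) := by
  simp only [IsKirchhoff, Prod.ext_iff_pairCoord (q := 0), map_zero, map_netInflow]
  exact forall_comm

end OrientedMetricGraph

namespace H1Fun

variable {G : OrientedMetricGraph}

theorem integral_dval (ψ : H1Fun G) (e : G.E) :
    ∫ s in (0:ℝ)..(G.len e), ψ.dval e s = ψ.val e (G.len e) - ψ.val e 0 := by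
  have := ψ.repr e (G.len e) ⟨(G.len_pos e).le, le_rfl⟩
  linarith

/-- `0` at a vertex without incident edges. -/
noncomputable def vertexVal (ψ : H1Fun G) (v : G.V) : ℝ :=
  if h : ∃ d : G.Dart, G.dartHead d = v then G.headVal ψ.val h.choose else 0

theorem headVal_eq_vertexVal (ψ : H1Fun G) (d : G.Dart) :
    G.headVal ψ.val d = ψ.vertexVal (G.dartHead d) := by
  have hd : ∃ d' : G.Dart, G.dartHead d' = G.dartHead d := ⟨d, rfl⟩
  rw [vertexVal, dif_pos hd]
  exact ψ.consistent d hd.choose hd.choose_spec.symm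

theorem val_len_eq_vertexVal (ψ : H1Fun G) (e : G.E) :
    ψ.val e (G.len e) = ψ.vertexVal (G.tgt e) :=
  ψ.headVal_eq_vertexVal (e, true)

theorem val_zero_eq_vertexVal (ψ : H1Fun G) (e : G.E) :
    ψ.val e 0 = ψ.vertexVal (G.src e) :=
  ψ.headVal_eq_vertexVal (e, false)

noncomputable def affineInterp (Ψ : G.V → ℝ) : H1Fun G where
  val e s := Ψ (G.src e) + s * ((Ψ (G.tgt e) - Ψ (G.src e)) / G.len e)
  dval e _ := (Ψ (G.tgt e) - Ψ (G.src e)) / G.len e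
  repr e s _ := by
    simp only [intervalIntegral.integral_const, sub_zero, smul_eq_mul, zero_mul, add_zero]
  dval_int _ := intervalIntegrable_const
  dval_L2 _ := memLp_const _
  consistent := by
    have hhead : ∀ d : G.Dart, G.headVal (fun e s =>
        Ψ (G.src e) + s * ((Ψ (G.tgt e) - Ψ (G.src e)) / G.len e)) d = Ψ (G.dartHead d) := by
      rintro ⟨e, _ | _⟩
      · simp [OrientedMetricGraph.headVal, OrientedMetricGraph.dartHead]
      · simp [OrientedMetricGraph.headVal, OrientedMetricGraph.dartHead,
          mul_div_cancel₀ _ (G.len_pos e).ne']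
    intro d₁ d₂ h
    rw [hhead, hhead, h]

theorem affineInterp_val_len_sub_val_zero (Ψ : G.V → ℝ) (e : G.E) :
    (affineInterp Ψ).val e (G.len e) - (affineInterp Ψ).val e 0 = Ψ (G.tgt e) - Ψ (G.src e) := by
  simp [affineInterp, mul_div_cancel₀ _ (G.len_pos e).ne']

/-- Continuous at the vertices because `g` has mean zero. -/
noncomputable def bump (e₀ : G.E) (g : ℝ → ℝ)
    (hg : MemLp g 2 (volume.restrict (Ioc (0:ℝ) (G.len e₀))))
    (hg₀ : ∫ s in (0:ℝ)..(G.len e₀), g s = 0) : H1Fun G where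
  val e s := if e = e₀ then ∫ t in (0:ℝ)..s, g t else 0
  dval e s := if e = e₀ then g s else 0
  repr e s _ := by split_ifs <;> simp
  dval_int e := by
    split_ifs with he
    · subst he
      exact (intervalIntegrable_iff_integrableOn_Ioc_of_le (G.len_pos e).le).mpr
        (hg.integrable one_le_two)
    · exact intervalIntegrable_const
  dval_L2 e := by
    split_ifs with he
    · exact he ▸ hg
    · exact memLp_const 0
  consistent := by
    have hhead : ∀ d : G.Dart,
        G.headVal (fun e s => if e = e₀ then ∫ t in (0:ℝ)..s, g t else 0) d = 0 := by
      rintro ⟨e, _ | _⟩ <;> by_cases he : e = e₀ <;>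
        simp [OrientedMetricGraph.headVal, he, hg₀]
    intro d₁ d₂ _
    rw [hhead, hhead]

theorem sum_integral_mul_bump_dval (h : G.E → ℝ → ℝ) {e₀ : G.E} {g : ℝ → ℝ}
    (hg : MemLp g 2 (volume.restrict (Ioc (0:ℝ) (G.len e₀))))
    (hg₀ : ∫ s in (0:ℝ)..(G.len e₀), g s = 0) :
    ∑ e : G.E, ∫ s in (0:ℝ)..(G.len e), h e s * (bump e₀ g hg hg₀).dval e s
      = ∫ s in (0:ℝ)..(G.len e₀), h e₀ s * g s := by
  rw [Finset.sum_eq_single e₀ (fun e _ he => by simp [bump, he]) (by simp)]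
  simp [bump]

end H1Fun

namespace CellGraph

variable {G : CellGraph}

theorem tangComp_eq_pairCoord (i : Fin 2) (e : G.E) (s : ℝ) :
    G.tangComp i e s = pairCoord i (G.tang e s) := by
  fin_cases i <;> rfl

theorem memLp_tang (e : G.E) : MemLp (G.tang e) ⊤ (volume.restrict (Ioc (0:ℝ) (G.len e))) :=
  MemLp.of_bound (G.tang_int e).1.aestronglyMeasurable 1
    ((G.tang_unit e).mono fun _ hs => hs.le)

theorem memLp_tangComp (i : Fin 2) (e : G.E) :
    MemLp (G.tangComp i e) 2 (volume.restrict (Ioc (0:ℝ) (G.len e))) := by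
  simp only [funext (tangComp_eq_pairCoord i e)]
  exact ((pairCoord i).comp_memLp' (memLp_tang e)).mono_exponent le_top

variable (G)

/-- `t_i + ∂_Γφ_i`, the tangential derivative of `φ_i + y_i` along the edge `e`. -/
noncomputable def correctedGrad (φ : Fin 2 → H1Fun G.toOrientedMetricGraph) (i : Fin 2)
    (e : G.E) (s : ℝ) : ℝ :=
  (φ i).dval e s + G.tangComp i e s

variable {G} (φ : Fin 2 → H1Fun G.toOrientedMetricGraph)

theorem memLp_correctedGrad (i : Fin 2) (e : G.E) :
    MemLp (G.correctedGrad φ i e) 2 (volume.restrict (Ioc (0:ℝ) (G.len e))) :=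
  ((φ i).dval_L2 e).add (memLp_tangComp i e)

theorem solvesCanonical_iff_sum_integral_correctedGrad_mul_dval_eq_zero :
    G.SolvesCanonical φ ↔ ∀ i, ∀ ψ : H1Fun G.toOrientedMetricGraph,
      ∑ e : G.E, ∫ s in (0:ℝ)..(G.len e), G.correctedGrad φ i e s * ψ.dval e s = 0 := by
  have hsplit : ∀ i (ψ : H1Fun G.toOrientedMetricGraph) e,
      ∫ s in (0:ℝ)..(G.len e), G.correctedGrad φ i e s * ψ.dval e s
        = (∫ s in (0:ℝ)..(G.len e), (φ i).dval e s * ψ.dval e s)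
          + ∫ s in (0:ℝ)..(G.len e), G.tangComp i e s * ψ.dval e s := by
    intro i ψ e
    have hL := (G.len_pos e).le
    simp only [correctedGrad, add_mul]
    exact intervalIntegral.integral_add
      ((intervalIntegrable_iff_integrableOn_Ioc_of_le hL).mpr
        (((φ i).dval_L2 e).integrable_mul (ψ.dval_L2 e)))
      ((intervalIntegrable_iff_integrableOn_Ioc_of_le hL).mpr
        ((memLp_tangComp i e).integrable_mul (ψ.dval_L2 e)))
  simp only [SolvesCanonical, hsplit, Finset.sum_add_distrib, ← eq_neg_iff_add_eq_zero]

theorem integral_mul_dval_of_ae_eq {e : G.E} {h : ℝ → ℝ} {c : ℝ}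
    (hc : ∀ᵐ s ∂volume.restrict (Ioc (0:ℝ) (G.len e)), h s = c)
    (ψ : H1Fun G.toOrientedMetricGraph) :
    ∫ s in (0:ℝ)..(G.len e), h s * ψ.dval e s = c * (ψ.val e (G.len e) - ψ.val e 0) := by
  rw [← ψ.integral_dval, ← intervalIntegral.integral_const_mul]
  refine intervalIntegral.integral_congr_ae ?_
  rw [uIoc_of_le (G.len_pos e).le]
  filter_upwards [(ae_restrict_iff' measurableSet_Ioc).mp hc] with s hs hmem
  rw [hs hmem]

theorem sum_integral_mul_dval_eq_zero_iff_isKirchhoff {h : G.E → ℝ → ℝ} {c : G.E → ℝ}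
    (hc : ∀ e, ∀ᵐ s ∂volume.restrict (Ioc (0:ℝ) (G.len e)), h e s = c e) :
    (∀ ψ : H1Fun G.toOrientedMetricGraph,
      ∑ e : G.E, ∫ s in (0:ℝ)..(G.len e), h e s * ψ.dval e s = 0) ↔ G.IsKirchhoff c := by
  simp only [integral_mul_dval_of_ae_eq (hc _),
    OrientedMetricGraph.isKirchhoff_iff_forall_sum_mul_sub_eq_zero]
  constructor
  · intro hψ Ψ
    simpa only [H1Fun.affineInterp_val_len_sub_val_zero] using hψ (H1Fun.affineInterp Ψ)
  · intro hΨ ψ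
    simpa only [H1Fun.val_len_eq_vertexVal, H1Fun.val_zero_eq_vertexVal] using hΨ ψ.vertexVal

theorem ae_eq_setAverage_of_sum_integral_mul_dval_eq_zero {h : G.E → ℝ → ℝ}
    (hh : ∀ e, MemLp (h e) 2 (volume.restrict (Ioc (0:ℝ) (G.len e))))
    (hψ : ∀ ψ : H1Fun G.toOrientedMetricGraph,
      ∑ e : G.E, ∫ s in (0:ℝ)..(G.len e), h e s * ψ.dval e s = 0) (e : G.E) :
    ∀ᵐ s ∂volume.restrict (Ioc (0:ℝ) (G.len e)), h e s = ⨍ t in Ioc (0:ℝ) (G.len e), h e t := by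
  refine ae_eq_average_of_forall_integral_mul_eq_zero (hh e) fun g hg hg₀ => ?_
  have hL := (G.len_pos e).le
  rw [← intervalIntegral.integral_of_le hL] at hg₀ ⊢
  rw [← H1Fun.sum_integral_mul_bump_dval h hg hg₀]
  exact hψ _

theorem val_add_emb_eq (i : Fin 2) (e : G.E) {s : ℝ} (hs : s ∈ Icc (0:ℝ) (G.len e)) :
    (φ i).val e s + pairCoord i (G.emb e s)
      = (φ i).val e 0 + pairCoord i (G.emb e 0) + ∫ t in (0:ℝ)..s, G.correctedGrad φ i e t := by
  have hsub : uIcc 0 s ⊆ uIcc 0 (G.len e) := by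
    rw [uIcc_of_le hs.1, uIcc_of_le (G.len_pos e).le]
    exact Icc_subset_Icc le_rfl hs.2
  have htang := (G.tang_int e).mono_set hsub
  have hdval := ((φ i).dval_int e).mono_set hsub
  have htangComp : IntervalIntegrable (G.tangComp i e) volume 0 s :=
    ((intervalIntegrable_iff_integrableOn_Ioc_of_le (G.len_pos e).le).mpr
      ((memLp_tangComp i e).integrable one_le_two)).mono_set hsub
  have hcoord : pairCoord i (∫ t in (0:ℝ)..s, G.tang e t) = ∫ t in (0:ℝ)..s, G.tangComp i e t := by
    simp only [← (pairCoord i).intervalIntegral_comp_comm htang, tangComp_eq_pairCoord]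
  rw [(φ i).repr e s hs, G.emb_rep e s hs, map_add, hcoord]
  unfold correctedGrad
  rw [intervalIntegral.integral_add hdval htangComp]
  ring

theorem affine_iff_ae_eq_pairCoord (e : G.E) (b : ℝ × ℝ) :
    (∀ s ∈ Icc (0:ℝ) (G.len e),
      (((φ 0).val e s + (G.emb e s).1, (φ 1).val e s + (G.emb e s).2) : ℝ × ℝ)
        = ((φ 0).val e 0 + (G.emb e 0).1, (φ 1).val e 0 + (G.emb e 0).2) + s • b) ↔
      ∀ i, ∀ᵐ s ∂volume.restrict (Ioc (0:ℝ) (G.len e)),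
        G.correctedGrad φ i e s = pairCoord i b := by
  have hpair : ∀ s i, pairCoord i
      (((φ 0).val e s + (G.emb e s).1, (φ 1).val e s + (G.emb e s).2) : ℝ × ℝ)
        = (φ i).val e s + pairCoord i (G.emb e s) := by
    intro s i
    fin_cases i <;> rfl
  have hintegrable : ∀ i, IntervalIntegrable (G.correctedGrad φ i e) volume 0 (G.len e) := fun i =>
    (intervalIntegrable_iff_integrableOn_Ioc_of_le (G.len_pos e).le).mpr
      ((memLp_correctedGrad φ i e).integrable one_le_two)
  have hcoords : ∀ s ∈ Icc (0:ℝ) (G.len e),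
      (((φ 0).val e s + (G.emb e s).1, (φ 1).val e s + (G.emb e s).2) : ℝ × ℝ)
        = ((φ 0).val e 0 + (G.emb e 0).1, (φ 1).val e 0 + (G.emb e 0).2) + s • b ↔
      ∀ i, ∫ t in (0:ℝ)..s, G.correctedGrad φ i e t = s • pairCoord i b := by
    intro s hs
    rw [Prod.ext_iff_pairCoord]
    refine forall_congr' fun i => ?_
    rw [map_add, map_smul, hpair, hpair, val_add_emb_eq φ i e hs, add_right_inj]
  calc _ ↔ ∀ s ∈ Icc (0:ℝ) (G.len e), ∀ i,
        ∫ t in (0:ℝ)..s, G.correctedGrad φ i e t = s • pairCoord i b := forall₂_congr hcoords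
    _ ↔ ∀ i, ∀ s ∈ Icc (0:ℝ) (G.len e),
        ∫ t in (0:ℝ)..s, G.correctedGrad φ i e t = s • pairCoord i b :=
      ⟨fun h i s hs => h s hs i, fun h s hs i => h i s hs⟩
    _ ↔ _ := forall_congr' fun i =>
      (ae_restrict_Ioc_eq_const_iff_integral_eq_smul (hintegrable i)).symm

end CellGraph

/-- `φ = (φ₀, φ₁) ∈ (H¹_♯(Γ_Y))²` solves the canonical cell
problem if and only if (i) on each edge, `s ↦ φ(γ_e(s)) + γ_e(s)` is affine
(with some slope `b_e ∈ ℝ²`), and (ii) at every vertex the Kirchhoff junction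
condition holds: the sum of the slopes over edges ending at the vertex minus
the sum over edges starting at the vertex vanishes. -/
theorem solvesCanonical_iff_affine_kirchhoff (G : CellGraph)
    (φ : Fin 2 → H1Fun G.toOrientedMetricGraph) :
    G.SolvesCanonical φ ↔
      ∃ slope : G.E → ℝ × ℝ,
        (∀ e : G.E, ∀ s ∈ Set.Icc (0:ℝ) (G.len e),
          (((φ 0).val e s + (G.emb e s).1, (φ 1).val e s + (G.emb e s).2) : ℝ × ℝ)
            = ((φ 0).val e 0 + (G.emb e 0).1, (φ 1).val e 0 + (G.emb e 0).2)
              + s • slope e) ∧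
        (∀ v : G.V,
          (∑ e : G.E, if G.tgt e = v then slope e else 0)
            - (∑ e : G.E, if G.src e = v then slope e else 0) = 0) := by
  rw [CellGraph.solvesCanonical_iff_sum_integral_correctedGrad_mul_dval_eq_zero]
  constructor
  · intro hweak
    set avg : Fin 2 → G.E → ℝ :=
      fun i e => ⨍ t in Ioc (0:ℝ) (G.len e), G.correctedGrad φ i e t
    have hconst : ∀ i e, ∀ᵐ s ∂volume.restrict (Ioc (0:ℝ) (G.len e)),
        G.correctedGrad φ i e s = avg i e := fun i =>
      CellGraph.ae_eq_setAverage_of_sum_integral_mul_dval_eq_zero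
        (CellGraph.memLp_correctedGrad φ i) (hweak i)
    have hslope : ∀ i e, pairCoord i (avg 0 e, avg 1 e) = avg i e := by
      intro i e
      fin_cases i <;> rfl
    refine ⟨fun e => (avg 0 e, avg 1 e), fun e => ?_, ?_⟩
    · exact (CellGraph.affine_iff_ae_eq_pairCoord φ e _).mpr fun i => by
        simpa only [hslope] using hconst i e
    · refine (OrientedMetricGraph.isKirchhoff_iff_pairCoord _).mpr fun i => ?_
      simpa only [hslope] using
        (CellGraph.sum_integral_mul_dval_eq_zero_iff_isKirchhoff (hconst i)).mp (hweak i)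
  · rintro ⟨slope, haffine, hkirchhoff⟩ i
    exact (CellGraph.sum_integral_mul_dval_eq_zero_iff_isKirchhoff fun e =>
      (CellGraph.affine_iff_ae_eq_pairCoord φ e (slope e)).mp (haffine e) i).mpr
      ((OrientedMetricGraph.isKirchhoff_iff_pairCoord slope).mp hkirchhoff i)
end

section
/- For the 'rhombus' unit-cell pattern with a vertical line through the center and two diagonals crossing at angle 2φ (φ ∈ (0, π/4)), consisting of two edges of length 1/2 and four edges of length 1/(2 cos φ), the homogenized tensor is A_hom = (cos φ)/(cos φ + 2) · diag(2 cos φ, 1). In particular A_hom is diagonal but not a scalar multiple of the identity for any φ ∈ (0, π/4). -/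
/-!
The incidence matrix is `M ⊗ₖ 1` with `M` the `4 × 6` vertex-edge matrix, so the saddle-point
system decouples into one scalar system per coordinate direction. In each of them the edges
`j` and `j + 3` (`j < 3`) have opposite columns in `M`, while row `j` of `M` is `e_{j+3} - e_j`.
The constraint `M b = 0` therefore forces `b_{j+3} = b_j`, and adding the two equilibrium equations
of the pair eliminates the multiplier `Q`, leaving `2 ℓ_j b_j = f_j + f_{j+3}`. This determines `b`,
and `A_hom` is then a direct computation; its two diagonal entries differ since `cos φ > 1/2`.
-/

open Matrix Real
open scoped Kronecker

namespace Matrix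

variable {m n R : Type*} [CommRing R]

theorem kronecker_one_mulVec_apply {κ : Type*} [Fintype n] [Fintype κ] [DecidableEq κ]
    (M : Matrix m n R) (v : n × κ → R) (i : m) (k : κ) :
    ((M ⊗ₖ (1 : Matrix κ κ R)) *ᵥ v) (i, k) = (M *ᵥ fun j => v (j, k)) i := by
  simp [mulVec, dotProduct, Fintype.sum_prod_type, one_apply]

theorem transpose_mulVec_add_eq_zero_of_col_eq_neg [Fintype m] (M : Matrix m n R) {j j' : n}
    (h : ∀ i, M i j' = -M i j) (q : m → R) : (Mᵀ *ᵥ q) j + (Mᵀ *ᵥ q) j' = 0 := by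
  simp [mulVec, dotProduct, h]

theorem apply_eq_of_mulVec_eq_zero [Fintype n] [DecidableEq n] {M : Matrix m n R} {x : n → R}
    (hx : M *ᵥ x = 0) {i : m} {j j' : n} (hrow : M i = Pi.single j' 1 - Pi.single j 1) :
    x j' = x j := by
  have := congrFun hx i
  rw [mulVec, hrow, sub_dotProduct, single_one_dotProduct, single_one_dotProduct] at this
  exact sub_eq_zero.mp this

theorem two_mul_apply_of_opposite_columns [Fintype m] [Fintype n] [DecidableEq n]
    {M : Matrix m n R} {ℓ x g : n → R} {q : m → R}
    (h₁ : ∀ j, ℓ j * x j + (Mᵀ *ᵥ q) j = g j) (h₂ : M *ᵥ x = 0) {i : m} {j j' : n}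
    (hrow : M i = Pi.single j' 1 - Pi.single j 1) (hcol : ∀ r, M r j' = -M r j)
    (hℓ : ℓ j' = ℓ j) : x j' = x j ∧ 2 * ℓ j * x j = g j + g j' := by
  have hx := apply_eq_of_mulVec_eq_zero h₂ hrow
  refine ⟨hx, ?_⟩
  have := h₁ j'
  rw [hx, hℓ] at this
  linear_combination h₁ j + this - transpose_mulVec_add_eq_zero_of_col_eq_neg M hcol q

theorem kronecker_one_system_component [Fintype m] [Fintype n] {κ : Type*} [Fintype κ]
    [DecidableEq κ] {M : Matrix m n R} {ℓ : n → R} {b f : n × κ → R} {Q : m × κ → R}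
    (h₁ : (fun p => ℓ p.1 * b p) + (M ⊗ₖ (1 : Matrix κ κ R))ᵀ *ᵥ Q = f)
    (h₂ : (M ⊗ₖ (1 : Matrix κ κ R)) *ᵥ b = 0) (k : κ) :
    (∀ j, ℓ j * b (j, k) + (Mᵀ *ᵥ fun i => Q (i, k)) j = f (j, k)) ∧
      M *ᵥ (fun j => b (j, k)) = 0 := by
  rw [← kroneckerMap_transpose, transpose_one] at h₁
  refine ⟨fun j => ?_, funext fun i => ?_⟩
  · rw [← kronecker_one_mulVec_apply, ← congrFun h₁ (j, k)]
    rfl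
  · rw [← kronecker_one_mulVec_apply, h₂]
    rfl

theorem diagonal_ne_smul_one {n : Type*} [DecidableEq n] {d : n → R} {i i' : n}
    (hd : d i ≠ d i') (a : R) : diagonal d ≠ a • (1 : Matrix n n R) := by
  rw [smul_one_eq_diagonal, Ne, diagonal_eq_diagonal_iff]
  exact fun h => hd (by rw [h i, h i'])

end Matrix

theorem half_lt_cos_of_mem_Ioo {φ : ℝ} (hφ : φ ∈ Set.Ioo 0 (π / 3)) : 1 / 2 < cos φ := by
  rw [← cos_pi_div_three]
  exact cos_lt_cos_of_nonneg_of_le_pi hφ.1.le (by linarith [pi_pos]) hφ.2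

abbrev rhombusIncidence : Matrix (Fin 4) (Fin 6) ℝ :=
  !![-1, 0, 0, 1, 0, 0; 0, -1, 0, 0, 1, 0; 0, 0, -1, 0, 0, 1; 1, 1, 1, -1, -1, -1]

theorem rhombus_component_eq {c : ℝ} (hc : c ≠ 0) {x g : Fin 6 → ℝ} {q : Fin 4 → ℝ}
    (h₁ : ∀ j, ![1 / (2 * c), 1 / (2 * c), 1/2, 1 / (2 * c), 1 / (2 * c), 1/2] j * x j
      + (rhombusIncidenceᵀ *ᵥ q) j = g j)
    (h₂ : rhombusIncidence *ᵥ x = 0) :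
    x = ![c * (g 0 + g 3), c * (g 1 + g 4), g 2 + g 5,
      c * (g 0 + g 3), c * (g 1 + g 4), g 2 + g 5] := by
  obtain ⟨h30, h0⟩ := two_mul_apply_of_opposite_columns h₁ h₂ (i := 0) (j := 0) (j' := 3)
    (by ext j; fin_cases j <;> simp) (by intro r; fin_cases r <;> simp) rfl
  obtain ⟨h41, h1⟩ := two_mul_apply_of_opposite_columns h₁ h₂ (i := 1) (j := 1) (j' := 4)
    (by ext j; fin_cases j <;> simp) (by intro r; fin_cases r <;> simp) rfl
  obtain ⟨h52, h2⟩ := two_mul_apply_of_opposite_columns h₁ h₂ (i := 2) (j := 2) (j' := 5)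
    (by ext j; fin_cases j <;> simp) (by intro r; fin_cases r <;> simp) rfl
  simp only [Matrix.cons_val] at h0 h1 h2
  field_simp at h0 h1 h2
  ext j
  fin_cases j <;> simp [h30, h41, h52] <;> linarith

theorem rhombus_Ahom_eq {c : ℝ} (hc : c ≠ 0) (hc2 : c + 2 ≠ 0) {b : Fin 6 × Fin 2 → ℝ}
    (hb₀ : (fun j => b (j, 0)) = ![-c, -c, 0, -c, -c, 0])
    (hb₁ : (fun j => b (j, 1)) = ![0, 0, 1, 0, 0, 1]) :
    (Matrix.of fun k l : Fin 2 => (1 / (1 + 2 / c)) * ∑ j : Fin 6,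
        ![1 / (2 * c), 1 / (2 * c), 1/2, 1 / (2 * c), 1 / (2 * c), 1/2] j * b (j, k) * b (j, l))
      = (c / (c + 2)) • Matrix.diagonal ![2 * c, 1] := by
  have h₀ : ∀ j, b (j, 0) = _ := congrFun hb₀
  have h₁ : ∀ j, b (j, 1) = _ := congrFun hb₁
  ext k l
  fin_cases k <;> fin_cases l <;> simp [Fin.sum_univ_six, h₀, h₁] <;> field_simp <;> ring

/-- For the 'rhombus' unit-cell pattern (a vertical line
through the center and two diagonals crossing at angle `2φ`, `φ ∈ (0, π/4)`;
two edges of length `1/2` and four of length `1/(2 cos φ)`), any solution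
`(b, Q)` of the algebraic system `L b + A_Iᵀ Q = f`, `A_I b = 0` yields the
homogenized tensor
`A_hom = (1/|Γ_Y|) Σ_j ℓ_j b_j b_jᵀ = (cos φ/(cos φ + 2)) diag(2 cos φ, 1)`,
with `|Γ_Y| = 1 + 2/cos φ`. In particular `A_hom` is diagonal but not a
scalar multiple of the identity. -/
theorem Ahom_rhombus_pattern (φ : ℝ) (hφ : φ ∈ Set.Ioo 0 (Real.pi / 4))
    (ℓ : Fin 6 → ℝ)
    (hℓ : ℓ = ![1 / (2 * Real.cos φ), 1 / (2 * Real.cos φ), 1/2,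
      1 / (2 * Real.cos φ), 1 / (2 * Real.cos φ), 1/2])
    (A : Matrix (Fin 4 × Fin 2) (Fin 6 × Fin 2) ℝ)
    (hA : A = Matrix.of fun p q =>
      (!![-1, 0, 0, 1, 0, 0; 0, -1, 0, 0, 1, 0; 0, 0, -1, 0, 0, 1;
          1, 1, 1, -1, -1, -1] : Matrix (Fin 4) (Fin 6) ℝ)
          p.1 q.1 * (if p.2 = q.2 then (1:ℝ) else 0))
    (f : Fin 6 × Fin 2 → ℝ)
    (hf : f = fun q => if q = (0, 0) then (-1:ℝ) else if q = (1, 0) then -1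
      else if q = (2, 1) then 1 else 0)
    (b : Fin 6 × Fin 2 → ℝ) (Q : Fin 4 × Fin 2 → ℝ)
    (hsys₁ : (fun q => ℓ q.1 * b q) + Aᵀ.mulVec Q = f)
    (hsys₂ : A.mulVec b = 0) :
    (Matrix.of fun k l : Fin 2 =>
        (1 / (1 + 2 / Real.cos φ)) * ∑ j : Fin 6, ℓ j * b (j, k) * b (j, l))
      = (Real.cos φ / (Real.cos φ + 2)) •
          Matrix.diagonal ![2 * Real.cos φ, 1] ∧
    ∀ c : ℝ, (Matrix.of fun k l : Fin 2 =>
        (1 / (1 + 2 / Real.cos φ)) * ∑ j : Fin 6, ℓ j * b (j, k) * b (j, l))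
      ≠ c • (1 : Matrix (Fin 2) (Fin 2) ℝ) := by
  have hc : 0 < cos φ :=
    cos_pos_of_mem_Ioo ⟨by linarith [hφ.1, pi_pos], by linarith [hφ.2, pi_pos]⟩
  have hc₂ : 1 / 2 < cos φ := half_lt_cos_of_mem_Ioo ⟨hφ.1, by linarith [hφ.2, pi_pos]⟩
  obtain rfl : A = rhombusIncidence ⊗ₖ 1 := by
    rw [hA]
    ext ⟨i, k⟩ ⟨j, l⟩
    simp [one_apply]
  subst hℓ hf
  have hsol := Matrix.kronecker_one_system_component hsys₁ hsys₂
  have hb₀ := rhombus_component_eq hc.ne' (hsol 0).1 (hsol 0).2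
  have hb₁ := rhombus_component_eq hc.ne' (hsol 1).1 (hsol 1).2
  simp only [Fin.isValue, Prod.mk.injEq, Fin.reduceEq, ↓reduceIte, and_true, and_false, and_self,
    zero_ne_one, one_ne_zero, add_zero, mul_neg, mul_one, mul_zero] at hb₀ hb₁
  rw [rhombus_Ahom_eq hc.ne' (by linarith) hb₀ hb₁, ← diagonal_smul]
  refine ⟨rfl, Matrix.diagonal_ne_smul_one (i := 0) (i' := 1) ?_⟩
  simp only [Pi.smul_apply, cons_val_zero, cons_val_one, smul_eq_mul, mul_one, Ne,
    mul_eq_left₀ (by positivity : cos φ / (cos φ + 2) ≠ 0)]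
  linarith
end

section
/- For the 'zigzag' unit-cell pattern consisting of three edges: from (0, 1/2) to (1/2, 0) (length √2/2), from (1/2, 0) to (1/2, 1) (length 1, a loop in the periodic graph), and from (1/2, 1) to (1, 1/2) (length √2/2), the homogenized tensor equals A_hom = 1/(1+√2) · [[√2/2, −√2/2], [−√2/2, √2/2 + 1]], which is symmetric positive definite and not diagonal. -/
open Matrix
open scoped Kronecker

/-!
With the edge vectors `b_j` as the columns of `X`, so that `b = vec X`, and `A_I = N ⊗ₖ 1` for
the incidence matrix `N` of the cell, the system `L b + A_Iᵀ Q = f`, `A_I b = 0` reads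
`X L + Y N = F`, `X Nᵀ = 0`. For the zigzag cell this determines `X` row by row: the loop edge
carries `f₁ / ℓ₁`, and the two slanted edges, forced equal by `X Nᵀ = 0`, both carry
`(f₀ + f₂) / (ℓ₀ + ℓ₂)`.
Then `A_hom = |Γ_Y|⁻¹ X L Xᵀ` is a congruence transform of the positive diagonal `L` by a matrix
of full row rank, hence positive definite.
-/

section Kronecker

variable {ι m n R : Type*} [CommRing R] [Fintype ι] [Fintype m]

theorem vec_mul_diagonal [DecidableEq ι] (X : Matrix n ι R) (ℓ : ι → R) :
    vec (X * diagonal ℓ) = fun q => ℓ q.1 * vec X q := by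
  ext ⟨j, k⟩
  simp [mul_comm]

theorem kronecker_one_system_iff [Fintype n] [DecidableEq ι] [DecidableEq n]
    (N : Matrix m ι R) (ℓ : ι → R) (X F : Matrix n ι R) (Y : Matrix n m R) :
    ((fun q => ℓ q.1 * vec X q) + (N ⊗ₖ (1 : Matrix n n R))ᵀ *ᵥ vec Y = vec F ∧
        (N ⊗ₖ (1 : Matrix n n R)) *ᵥ vec X = 0) ↔
      X * diagonal ℓ + Y * N = F ∧ X * Nᵀ = 0 := by
  rw [← kroneckerMap_transpose, transpose_one, kronecker_mulVec_vec, kronecker_mulVec_vec,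
    ← vec_mul_diagonal, Matrix.one_mul, Matrix.one_mul, transpose_transpose, ← vec_add, vec_inj,
    ← vec_zero, vec_inj]

end Kronecker

section HomogenizedTensor

variable {ι n : Type*} [Fintype ι] [DecidableEq ι]

noncomputable def homogenizedTensor (γ : ℝ) (ℓ : ι → ℝ) (X : Matrix n ι ℝ) : Matrix n n ℝ :=
  (1 / γ) • (X * diagonal ℓ * Xᵀ)

theorem of_sum_eq_homogenizedTensor (γ : ℝ) (ℓ : ι → ℝ) (b : ι × n → ℝ) :
    (of fun k l => 1 / γ * ∑ j, ℓ j * b (j, k) * b (j, l)) =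
      homogenizedTensor γ ℓ (of fun k j => b (j, k)) := by
  ext k l
  simp [homogenizedTensor, mul_apply, diagonal_apply, mul_comm]

theorem homogenizedTensor_posDef [Fintype n] {γ : ℝ} (hγ : 0 < γ) {ℓ : ι → ℝ}
    (hℓ : ∀ j, 0 < ℓ j) {X : Matrix n ι ℝ} (hX : Function.Injective X.vecMul) :
    (homogenizedTensor γ ℓ X).PosDef := by
  have hXLXt := (PosDef.diagonal hℓ).mul_mul_conjTranspose_same hX
  rw [conjTranspose_eq_transpose_of_trivial] at hXLXt
  exact hXLXt.smul (one_div_pos.mpr hγ)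

end HomogenizedTensor

section Zigzag

def zigzagIncidence (K : Type*) [Ring K] : Matrix (Fin 2) (Fin 3) K :=
  !![-1, 0, 1; 1, 0, -1]

theorem zigzag_system_solution {K n : Type*} [Field K] {ℓ : Fin 3 → K} (h02 : ℓ 0 + ℓ 2 ≠ 0)
    (h1 : ℓ 1 ≠ 0) {X F : Matrix n (Fin 3) K} {Y : Matrix n (Fin 2) K}
    (h₁ : X * diagonal ℓ + Y * zigzagIncidence K = F) (h₂ : X * (zigzagIncidence K)ᵀ = 0) :
    X = of fun k => ![(F k 0 + F k 2) / (ℓ 0 + ℓ 2), F k 1 / ℓ 1,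
      (F k 0 + F k 2) / (ℓ 0 + ℓ 2)] := by
  ext k j
  have e₀ := congrFun₂ h₁ k 0
  have e₁ := congrFun₂ h₁ k 1
  have e₂ := congrFun₂ h₁ k 2
  have c := congrFun₂ h₂ k 0
  simp only [zigzagIncidence, Matrix.add_apply, mul_apply, Fin.sum_univ_three, Fin.sum_univ_two,
    diagonal_apply_eq, ne_eq, one_ne_zero, not_false_eq_true, diagonal_apply_ne, Fin.reduceEq,
    of_apply, cons_val', cons_val_zero, cons_val_fin_one, cons_val_one, zero_ne_one, cons_val,
    transpose_apply, Matrix.zero_apply, mul_zero, mul_neg, mul_one, add_zero, zero_add]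
    at e₀ e₁ e₂ c
  fin_cases j <;> simp only [Fin.zero_eta, Fin.mk_one, Fin.reduceFinMk, of_apply, cons_val_zero,
    cons_val_one, cons_val] <;> field_simp
  · linear_combination e₀ + e₂ - ℓ 2 * c
  · linear_combination e₁
  · linear_combination e₀ + e₂ + ℓ 0 * c

noncomputable def zigzagFlux : Matrix (Fin 2) (Fin 3) ℝ :=
  !![√2 / 2, 0, √2 / 2; -(√2 / 2), 1, -(√2 / 2)]

theorem zigzagFlux_vecMul_injective : Function.Injective zigzagFlux.vecMul := by
  intro x y hxy
  have e₀ := congrFun hxy 0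
  have e₁ : x 1 = y 1 := by simpa [zigzagFlux, vecMul, dotProduct] using congrFun hxy 1
  simp only [zigzagFlux, vecMul, dotProduct, Fin.sum_univ_two, of_apply, cons_val', cons_val_zero,
    cons_val_fin_one, cons_val_one, mul_neg] at e₀
  have h₀ : (x 0 - y 0) * (√2 / 2) = 0 := by linear_combination e₀ + √2 / 2 * e₁
  have e₀' : x 0 = y 0 := sub_eq_zero.mp ((mul_eq_zero.mp h₀).resolve_right (by positivity))
  ext i
  fin_cases i
  exacts [e₀', e₁]

theorem zigzag_homogenizedTensor :
    homogenizedTensor (1 + √2) ![√2 / 2, 1, √2 / 2] zigzagFlux =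
      (1 / (1 + √2)) • !![√2 / 2, -√2 / 2; -√2 / 2, √2 / 2 + 1] := by
  have half_sq : √2 / 2 * (√2 / 2) = 1 / 2 := by
    rw [div_mul_div_comm, Real.mul_self_sqrt zero_le_two]
    norm_num
  unfold homogenizedTensor zigzagFlux
  congr 1
  ext k l
  fin_cases k <;> fin_cases l <;> simp only [mul_apply, transpose_apply, Fin.sum_univ_three] <;>
    simp <;> rw [half_sq] <;> ring

end Zigzag

/-- For the 'zigzag' unit-cell pattern (edges from
`(0,1/2)` to `(1/2,0)` of length `√2/2`, from `(1/2,0)` to `(1/2,1)` of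
length `1` — a loop in the periodic graph — and from `(1/2,1)` to `(1,1/2)`
of length `√2/2`), any solution `(b, Q)` of the algebraic system
`L b + A_Iᵀ Q = f`, `A_I b = 0` yields the homogenized tensor
`A_hom = (1/(1+√2)) [[√2/2, −√2/2], [−√2/2, √2/2 + 1]]`, with
`|Γ_Y| = 1 + √2`; `A_hom` is symmetric positive definite and not
diagonal. -/
theorem Ahom_zigzag_pattern
    (ℓ : Fin 3 → ℝ) (hℓ : ℓ = ![Real.sqrt 2 / 2, 1, Real.sqrt 2 / 2])
    (A : Matrix (Fin 2 × Fin 2) (Fin 3 × Fin 2) ℝ)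
    (hA : A = Matrix.of fun p q =>
      (!![-1, 0, 1; 1, 0, -1] : Matrix (Fin 2) (Fin 3) ℝ)
          p.1 q.1 * (if p.2 = q.2 then (1:ℝ) else 0))
    (f : Fin 3 × Fin 2 → ℝ)
    (hf : f = fun q => if q = (1, 1) then (1:ℝ) else if q = (2, 0) then 1
      else if q = (2, 1) then -1 else 0)
    (b : Fin 3 × Fin 2 → ℝ) (Q : Fin 2 × Fin 2 → ℝ)
    (hsys₁ : (fun q => ℓ q.1 * b q) + Aᵀ.mulVec Q = f)
    (hsys₂ : A.mulVec b = 0) :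
    (Matrix.of fun k l : Fin 2 =>
        (1 / (1 + Real.sqrt 2)) * ∑ j : Fin 3, ℓ j * b (j, k) * b (j, l))
      = (1 / (1 + Real.sqrt 2)) •
          !![Real.sqrt 2 / 2, -(Real.sqrt 2) / 2;
             -(Real.sqrt 2) / 2, Real.sqrt 2 / 2 + 1] ∧
    (Matrix.of fun k l : Fin 2 =>
        (1 / (1 + Real.sqrt 2)) * ∑ j : Fin 3, ℓ j * b (j, k) * b (j, l)).PosDef ∧
    (Matrix.of fun k l : Fin 2 =>
        (1 / (1 + Real.sqrt 2)) * ∑ j : Fin 3, ℓ j * b (j, k) * b (j, l)) 0 1 ≠ 0 := by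
  replace hA : A = zigzagIncidence ℝ ⊗ₖ 1 := hA
  subst hA
  obtain ⟨h₁, h₂⟩ := (kronecker_one_system_iff _ ℓ (of fun k j => b (j, k))
    (of fun k j => f (j, k)) (of fun k i => Q (i, k))).mp ⟨hsys₁, hsys₂⟩
  subst hℓ hf
  have hX : (of fun k j => b (j, k)) = zigzagFlux := by
    have inv_sqrt_two : (√2)⁻¹ = √2 / 2 := Real.sqrt_div_self.symm
    rw [zigzag_system_solution (by simp) (by simp) h₁ h₂, zigzagFlux]
    ext k j
    fin_cases k <;> fin_cases j <;> simp [inv_sqrt_two, neg_div]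
  rw [of_sum_eq_homogenizedTensor, hX]
  refine ⟨zigzag_homogenizedTensor, homogenizedTensor_posDef (by positivity)
    (by simp [Fin.forall_fin_succ]) zigzagFlux_vecMul_injective, ?_⟩
  rw [zigzag_homogenizedTensor, Matrix.smul_apply, smul_eq_mul]
  exact mul_ne_zero (by positivity) (by simp)
end

section
/- Let f ∈ L²(0,T; L²(Γ_Y; C(Ω̄))) and define f^δ(t,x) = f(t, x, x/δ) on (0,T) × Γ^δ. Then for every admissible period δ > 0, f^δ ∈ L²(0,T; L²(Γ^δ)) and δ ‖f^δ‖²_{L²(0,T;L²(Γ^δ))} ≤ |Ω| ‖f‖²_{L²(0,T;L²(Γ_Y;L^∞(Ω)))}. -/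
/-!
On the copy `δ(Γ_Y + n)` of the unit cell, the point `x = δ(y + n)` lies in `Ω̄` because
`Γ_Y ⊂ [0,1]²`, so `f(t, x, y)² ≤ sup_{Ω̄} |f(t, ·, y)|²`. The substitution `x = δ y` turns the
integral over a scaled edge into `δ` times the integral over the edge of `Γ_Y`; summing over the
`N₁ N₂` cells gives the factor `N₁ N₂ δ`, and the extra `δ` turns it into `N₁δ · N₂δ = |Ω|`.
-/

open MeasureTheory

open Set

theorem intervalIntegrable_and_integral_le_of_le {g h : ℝ → ℝ} {a b : ℝ} (hab : a ≤ b)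
    (hg : AEStronglyMeasurable g (volume.restrict (Ioc a b)))
    (hh : IntervalIntegrable h volume a b) (hg₀ : ∀ x ∈ Icc a b, 0 ≤ g x)
    (hgh : ∀ x ∈ Icc a b, g x ≤ h x) :
    IntervalIntegrable g volume a b ∧ ∫ x in a..b, g x ≤ ∫ x in a..b, h x := by
  have hg_int : IntervalIntegrable g volume a b := by
    refine hh.mono_fun' (by rwa [uIoc_of_le hab]) ?_
    rw [uIoc_of_le hab]
    refine ae_restrict_of_forall_mem measurableSet_Ioc fun x hx => ?_
    have hx' := Ioc_subset_Icc_self hx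
    exact (Real.norm_of_nonneg (hg₀ x hx')).trans_le (hgh x hx')
  exact ⟨hg_int, intervalIntegral.integral_mono_on hab hg_int hh hgh⟩

theorem IntervalIntegrable.comp_div {h : ℝ → ℝ} {δ ℓ : ℝ} (hh : IntervalIntegrable h volume 0 ℓ) :
    IntervalIntegrable (fun σ => h (σ / δ)) volume 0 (δ * ℓ) := by
  simpa [div_eq_mul_inv, mul_comm] using hh.comp_mul_right (c := δ⁻¹)

theorem intervalIntegral.integral_comp_div_mul {h : ℝ → ℝ} {δ : ℝ} (hδ : δ ≠ 0) (ℓ : ℝ) :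
    ∫ σ in 0..δ * ℓ, h (σ / δ) = δ * ∫ s in 0..ℓ, h s := by
  rw [intervalIntegral.integral_comp_div h hδ, zero_div, mul_div_cancel_left₀ _ hδ, smul_eq_mul]

theorem div_mem_Icc_of_mem_Icc_mul {δ ℓ σ : ℝ} (hδ : 0 < δ) (hσ : σ ∈ Icc 0 (δ * ℓ)) :
    σ / δ ∈ Icc 0 ℓ :=
  ⟨div_nonneg hσ.1 hδ.le, (div_le_iff₀' hδ).mpr hσ.2⟩

theorem aestronglyMeasurable_restrict_Ioc_of_eqOn {g g' : ℝ → ℝ} (hg' : Measurable g')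
    {a b : ℝ} (h : EqOn g' g (Icc a b)) : AEStronglyMeasurable g (volume.restrict (Ioc a b)) :=
  hg'.aestronglyMeasurable.congr
    (ae_restrict_of_forall_mem measurableSet_Ioc fun _ hx => h (Ioc_subset_Icc_self hx))

theorem measurable_intervalIntegral_of_eqOn {F : ℝ × ℝ → ℝ} (hF : Measurable F)
    {g : ℝ → ℝ → ℝ} {a b : ℝ} (hab : a ≤ b) (h : ∀ t, EqOn (fun σ => F (t, σ)) (g t) (Icc a b)) :
    Measurable fun t => ∫ σ in a..b, g t σ := by
  have hg : (fun t => ∫ σ in a..b, g t σ) = fun t => ∫ σ in Ioc a b, F (t, σ) := by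
    funext t
    rw [intervalIntegral.integral_of_le hab]
    exact setIntegral_congr_fun measurableSet_Ioc fun σ hσ => (h t (Ioc_subset_Icc_self hσ)).symm
  rw [hg]
  exact hF.stronglyMeasurable.integral_prod_right'.measurable

/-- `‖g‖_{L^∞(K)}` for `g` continuous on a compact `K`; junk (`sSup` of an unbounded set is `0`)
otherwise. -/
noncomputable def supAbsOn {α : Type*} (K : Set α) (g : α → ℝ) : ℝ :=
  sSup ((fun x => |g x|) '' K)

theorem sq_le_sq_supAbsOn {α : Type*} [TopologicalSpace α] {K : Set α} (hK : IsCompact K)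
    {g : α → ℝ} (hg : ContinuousOn g K) {x : α} (hx : x ∈ K) : g x ^ 2 ≤ supAbsOn K g ^ 2 := by
  have hbdd := (hK.image_of_continuousOn hg.abs).bddAbove
  rw [← sq_abs]
  exact pow_le_pow_left₀ (abs_nonneg _) (le_csSup hbdd (mem_image_of_mem _ hx)) 2

theorem smul_add_natCast_mem_Icc {p : ℝ × ℝ} (hp : p ∈ Icc ((0 : ℝ), (0 : ℝ)) ((1 : ℝ), (1 : ℝ)))
    {δ : ℝ} (hδ : 0 ≤ δ) {n₁ n₂ N₁ N₂ : ℕ} (h₁ : n₁ < N₁) (h₂ : n₂ < N₂) :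
    δ • (p + ((n₁ : ℝ), (n₂ : ℝ))) ∈ Icc ((0 : ℝ), (0 : ℝ)) ((N₁ : ℝ) * δ, (N₂ : ℝ) * δ) := by
  obtain ⟨⟨hp₁, hp₂⟩, hp₁', hp₂'⟩ := hp
  have h₁' : (n₁ : ℝ) + 1 ≤ N₁ := by exact_mod_cast h₁
  have h₂' : (n₂ : ℝ) + 1 ≤ N₂ := by exact_mod_cast h₂
  refine ⟨⟨?_, ?_⟩, ?_, ?_⟩ <;> dsimp at * <;> nlinarith

namespace CellGraph

variable (G : CellGraph)

theorem continuousOn_emb (e : G.E) : ContinuousOn (G.emb e) (Icc 0 (G.len e)) := by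
  have hprim : ContinuousOn (fun s => ∫ u in (0 : ℝ)..s, G.tang e u) (Icc 0 (G.len e)) := by
    simpa only [uIcc_of_le (G.len_pos e).le] using
      intervalIntegral.continuousOn_primitive_interval' (G.tang_int e) left_mem_uIcc
  exact (continuousOn_const.add hprim).congr fun s hs => G.emb_rep e s hs

theorem exists_continuous_eqOn_emb (e : G.E) :
    ∃ γ : ℝ → ℝ × ℝ, Continuous γ ∧ EqOn γ (G.emb e) (Icc 0 (G.len e)) :=
  ⟨IccExtend (G.len_pos e).le ((Icc 0 (G.len e)).domRestrict (G.emb e)),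
    (G.continuousOn_emb e).domRestrict.Icc_extend', fun _ hs => IccExtend_of_mem _ _ hs⟩

/-- `f^δ(t, ·)` on the copy `δ (e + n)` of the edge `e`, at arc length `σ` along the copy. -/
noncomputable def rescaled (f : ℝ → ℝ × ℝ → G.E → ℝ → ℝ) (δ : ℝ) (n : ℝ × ℝ) (t : ℝ) (e : G.E)
    (σ : ℝ) : ℝ :=
  f t (δ • (G.emb e (σ / δ) + n)) e (σ / δ)

/-- `‖f^δ(t)‖²_{L²(Γ^δ)}`, the cell `(n₁, n₂)` being `δ ([0,1]² + (n₁, n₂))`. -/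
noncomputable def rescaledNormSq (f : ℝ → ℝ × ℝ → G.E → ℝ → ℝ) (δ : ℝ) (N₁ N₂ : ℕ) (t : ℝ) : ℝ :=
  ∑ n₁ : Fin N₁, ∑ n₂ : Fin N₂, ∑ e : G.E,
    ∫ σ in (0 : ℝ)..(δ * G.len e), G.rescaled f δ (((n₁ : ℕ) : ℝ), ((n₂ : ℕ) : ℝ)) t e σ ^ 2

/-- `‖f(t)‖²_{L²(Γ_Y; L^∞(K))}`. -/
noncomputable def supNormSq (K : Set (ℝ × ℝ)) (f : ℝ → ℝ × ℝ → G.E → ℝ → ℝ) (t : ℝ) : ℝ :=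
  ∑ e : G.E, ∫ s in (0 : ℝ)..(G.len e), supAbsOn K (fun x => f t x e s) ^ 2

variable {G} {f : ℝ → ℝ × ℝ → G.E → ℝ → ℝ} {δ : ℝ}

/-- `emb` is not assumed measurable; on `[0, len e]` it agrees with a continuous function, which
gives a jointly measurable version of the integrand. -/
theorem exists_measurable_eqOn_rescaled_sq (hδ : 0 < δ) {e : G.E}
    (hf : Measurable fun p : ℝ × (ℝ × ℝ) × ℝ => f p.1 p.2.1 e p.2.2) (n : ℝ × ℝ) :
    ∃ F : ℝ × ℝ → ℝ, Measurable F ∧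
      ∀ t, EqOn (fun σ => F (t, σ)) (fun σ => G.rescaled f δ n t e σ ^ 2)
        (Icc 0 (δ * G.len e)) := by
  obtain ⟨γ, hγ, hγ_eq⟩ := G.exists_continuous_eqOn_emb e
  refine ⟨fun p => f p.1 (δ • (γ (p.2 / δ) + n)) e (p.2 / δ) ^ 2, ?_, fun t σ hσ => ?_⟩
  · have hcopy : Continuous fun σ : ℝ => δ • (γ (σ / δ) + n) := by fun_prop
    exact (hf.comp (measurable_fst.prodMk ((hcopy.measurable.comp measurable_snd).prodMk
      (measurable_snd.div_const δ)))).pow_const 2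
  · simp only [rescaled, hγ_eq (div_mem_Icc_of_mem_Icc_mul hδ hσ)]

theorem measurable_rescaledNormSq (hδ : 0 < δ)
    (hf : ∀ e, Measurable fun p : ℝ × (ℝ × ℝ) × ℝ => f p.1 p.2.1 e p.2.2) (N₁ N₂ : ℕ) :
    Measurable (G.rescaledNormSq f δ N₁ N₂) := by
  refine Finset.measurable_sum _ fun n₁ _ => Finset.measurable_sum _ fun n₂ _ =>
    Finset.measurable_sum _ fun e _ => ?_
  obtain ⟨F, hF, hF_eq⟩ :=
    exists_measurable_eqOn_rescaled_sq hδ (hf e) (((n₁ : ℕ) : ℝ), ((n₂ : ℕ) : ℝ))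
  exact measurable_intervalIntegral_of_eqOn hF (mul_nonneg hδ.le (G.len_pos e).le) hF_eq

theorem rescaled_sq_intervalIntegrable_and_integral_le (hδ : 0 < δ) {K : Set (ℝ × ℝ)}
    (hK : IsCompact K) {t : ℝ} {e : G.E} {n : ℝ × ℝ}
    (hcell : ∀ s ∈ Icc 0 (G.len e), δ • (G.emb e s + n) ∈ K)
    (hf : Measurable fun p : ℝ × (ℝ × ℝ) × ℝ => f p.1 p.2.1 e p.2.2)
    (hcont : ∀ s, ContinuousOn (fun x => f t x e s) K)
    (hsup : IntervalIntegrable (fun s => supAbsOn K (fun x => f t x e s) ^ 2) volume 0 (G.len e)) :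
    IntervalIntegrable (fun σ => G.rescaled f δ n t e σ ^ 2) volume 0 (δ * G.len e) ∧
      ∫ σ in (0 : ℝ)..(δ * G.len e), G.rescaled f δ n t e σ ^ 2
        ≤ δ * ∫ s in (0 : ℝ)..(G.len e), supAbsOn K (fun x => f t x e s) ^ 2 := by
  obtain ⟨F, hF, hF_eq⟩ := exists_measurable_eqOn_rescaled_sq hδ hf n
  have hle : ∀ σ ∈ Icc 0 (δ * G.len e),
      G.rescaled f δ n t e σ ^ 2 ≤ supAbsOn K (fun x => f t x e (σ / δ)) ^ 2 := fun σ hσ =>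
    sq_le_sq_supAbsOn hK (hcont _)
      (hcell _ (div_mem_Icc_of_mem_Icc_mul hδ hσ))
  obtain ⟨hint, hint_le⟩ := intervalIntegrable_and_integral_le_of_le
    (mul_nonneg hδ.le (G.len_pos e).le)
    (aestronglyMeasurable_restrict_Ioc_of_eqOn (hF.comp measurable_prodMk_left) (hF_eq t))
    hsup.comp_div (fun _ _ => sq_nonneg _) hle
  exact ⟨hint, hint_le.trans_eq (intervalIntegral.integral_comp_div_mul
    (h := fun s => supAbsOn K (fun x => f t x e s) ^ 2) hδ.ne' _)⟩

theorem rescaledNormSq_nonneg (hδ : 0 < δ) (N₁ N₂ : ℕ) (t : ℝ) :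
    0 ≤ G.rescaledNormSq f δ N₁ N₂ t :=
  Finset.sum_nonneg fun _ _ => Finset.sum_nonneg fun _ _ => Finset.sum_nonneg fun e _ =>
    intervalIntegral.integral_nonneg (mul_nonneg hδ.le (G.len_pos e).le) fun _ _ => sq_nonneg _

theorem rescaledNormSq_le (hδ : 0 < δ) {K : Set (ℝ × ℝ)} (hK : IsCompact K) {N₁ N₂ : ℕ}
    (hcell : ∀ (n₁ : Fin N₁) (n₂ : Fin N₂) (e : G.E), ∀ s ∈ Icc 0 (G.len e),
      δ • (G.emb e s + (((n₁ : ℕ) : ℝ), ((n₂ : ℕ) : ℝ))) ∈ K)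
    (hf : ∀ e, Measurable fun p : ℝ × (ℝ × ℝ) × ℝ => f p.1 p.2.1 e p.2.2) {t : ℝ}
    (hcont : ∀ e s, ContinuousOn (fun x => f t x e s) K)
    (hsup : ∀ e,
      IntervalIntegrable (fun s => supAbsOn K (fun x => f t x e s) ^ 2) volume 0 (G.len e)) :
    G.rescaledNormSq f δ N₁ N₂ t ≤ (N₁ * N₂ * δ) * G.supNormSq K f t := by
  calc G.rescaledNormSq f δ N₁ N₂ t
      ≤ ∑ _n₁ : Fin N₁, ∑ _n₂ : Fin N₂, ∑ e : G.E,
          δ * ∫ s in (0 : ℝ)..(G.len e), supAbsOn K (fun x => f t x e s) ^ 2 :=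
        Finset.sum_le_sum fun n₁ _ => Finset.sum_le_sum fun n₂ _ => Finset.sum_le_sum fun e _ =>
          (rescaled_sq_intervalIntegrable_and_integral_le hδ hK (hcell n₁ n₂ e) (hf e)
            (hcont e) (hsup e)).2
    _ = (N₁ * N₂ * δ) * G.supNormSq K f t := by
        simp only [supNormSq, ← Finset.mul_sum, Finset.sum_const, Finset.card_univ,
          Fintype.card_fin, nsmul_eq_mul]
        ring

end CellGraph

/-- Let `f ∈ L²(0,T; L²(Γ_Y; C(Ω̄)))` and set
`f^δ(t,x) = f(t, x, x/δ)` on `(0,T) × Γ^δ`, where `Γ^δ` is the union of the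
scaled translated unit cells `δ(Γ_Y + (n₁, n₂))` filling
`Ω = [0,L₁] × [0,L₂]` (`L_i = N_i δ`). Then `f^δ ∈ L²(0,T; L²(Γ^δ))` and
`δ ‖f^δ‖²_{L²(0,T;L²(Γ^δ))} ≤ |Ω| ‖f‖²_{L²(0,T;L²(Γ_Y;L^∞(Ω)))}`. -/
theorem fdelta_L2_bound (G : CellGraph) (T L₁ L₂ δ : ℝ) (hT : 0 < T) (hδ : 0 < δ)
    (N₁ N₂ : ℕ) (hN₁ : (N₁ : ℝ) * δ = L₁) (hN₂ : (N₂ : ℝ) * δ = L₂)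
    (hemb : ∀ e : G.E, ∀ s ∈ Set.Icc (0:ℝ) (G.len e),
      G.emb e s ∈ Set.Icc (((0:ℝ), (0:ℝ)) : ℝ × ℝ) ((1:ℝ), (1:ℝ)))
    (f : ℝ → ℝ × ℝ → G.E → ℝ → ℝ)
    (hmeas : ∀ e, Measurable fun p : ℝ × (ℝ × ℝ) × ℝ => f p.1 p.2.1 e p.2.2)
    (hcont : ∀ t e s, ContinuousOn (fun x => f t x e s)
      (Set.Icc (((0:ℝ), (0:ℝ)) : ℝ × ℝ) (L₁, L₂)))
    (hsup_int : ∀ t e, IntervalIntegrable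
      (fun s => (sSup ((fun x => |f t x e s|) ''
        Set.Icc (((0:ℝ), (0:ℝ)) : ℝ × ℝ) (L₁, L₂)))^2)
      MeasureTheory.volume 0 (G.len e))
    (houter : IntervalIntegrable
      (fun t => ∑ e : G.E, ∫ s in (0:ℝ)..(G.len e),
        (sSup ((fun x => |f t x e s|) ''
          Set.Icc (((0:ℝ), (0:ℝ)) : ℝ × ℝ) (L₁, L₂)))^2)
      MeasureTheory.volume 0 T) :
    -- `f^δ ∈ L²(0,T; L²(Γ^δ))` ...
    (∀ t, ∀ n₁ : Fin N₁, ∀ n₂ : Fin N₂, ∀ e : G.E,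
      IntervalIntegrable
        (fun σ => (f t (δ • (G.emb e (σ / δ) + (((n₁:ℕ):ℝ), ((n₂:ℕ):ℝ)))) e (σ / δ))^2)
        MeasureTheory.volume 0 (δ * G.len e)) ∧
    IntervalIntegrable
      (fun t => ∑ n₁ : Fin N₁, ∑ n₂ : Fin N₂, ∑ e : G.E,
        ∫ σ in (0:ℝ)..(δ * G.len e),
          (f t (δ • (G.emb e (σ / δ) + (((n₁:ℕ):ℝ), ((n₂:ℕ):ℝ)))) e (σ / δ))^2)
      MeasureTheory.volume 0 T ∧
    -- ... and the uniform bound holds: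
    δ * ∫ t in (0:ℝ)..T, ∑ n₁ : Fin N₁, ∑ n₂ : Fin N₂, ∑ e : G.E,
        ∫ σ in (0:ℝ)..(δ * G.len e),
          (f t (δ • (G.emb e (σ / δ) + (((n₁:ℕ):ℝ), ((n₂:ℕ):ℝ)))) e (σ / δ))^2
      ≤ (L₁ * L₂) * ∫ t in (0:ℝ)..T, ∑ e : G.E, ∫ s in (0:ℝ)..(G.len e),
          (sSup ((fun x => |f t x e s|) ''
            Set.Icc (((0:ℝ), (0:ℝ)) : ℝ × ℝ) (L₁, L₂)))^2 := by
  subst hN₁ hN₂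
  have hcell : ∀ (n₁ : Fin N₁) (n₂ : Fin N₂) (e : G.E), ∀ s ∈ Icc 0 (G.len e),
      δ • (G.emb e s + (((n₁ : ℕ) : ℝ), ((n₂ : ℕ) : ℝ))) ∈ Icc (0, 0) (N₁ * δ, N₂ * δ) :=
    fun n₁ n₂ e s hs => smul_add_natCast_mem_Icc (hemb e s hs) hδ.le n₁.2 n₂.2
  obtain ⟨hint, hint_le⟩ := intervalIntegrable_and_integral_le_of_le hT.le
    (CellGraph.measurable_rescaledNormSq hδ hmeas N₁ N₂).aestronglyMeasurable
    (houter.const_mul (N₁ * N₂ * δ)) (fun t _ => CellGraph.rescaledNormSq_nonneg hδ N₁ N₂ t)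
    fun t _ => CellGraph.rescaledNormSq_le hδ isCompact_Icc hcell hmeas (hcont t) (hsup_int t)
  refine ⟨fun t n₁ n₂ e => (CellGraph.rescaled_sq_intervalIntegrable_and_integral_le hδ
    isCompact_Icc (hcell n₁ n₂ e) (hmeas e) (hcont t e) (hsup_int t e)).1, hint, ?_⟩
  calc _ ≤ δ * ∫ t in (0 : ℝ)..T, (N₁ * N₂ * δ) * G.supNormSq (Icc (0, 0) (N₁ * δ, N₂ * δ)) f t :=
        mul_le_mul_of_nonneg_left hint_le hδ.le
    _ = _ := by
        rw [intervalIntegral.integral_const_mul]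
        unfold CellGraph.supNormSq supAbsOn
        ring
end

section
/- Let v ∈ H¹_0(Γ^δ) (H¹ functions on the finite mesh Γ^δ vanishing at all boundary points ∂Γ^δ) and let C be a circuit of the periodic unit graph Γ'_{Y,♯}. Then ∫_{Γ^δ} ∂_Γ v(x) χ_C(x/δ) ds(x) = 0. -/
open MeasureTheory

namespace CellGraph

variable (G : CellGraph)

/-- Embedded position of the endpoint of a dart where its traversal ends. -/
noncomputable def embHead (d : G.Dart) : ℝ × ℝ :=
  if d.2 then G.emb d.1 (G.len d.1) else G.emb d.1 0

/-- Embedded position of the endpoint of a dart where its traversal starts. -/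
noncomputable def embTail (d : G.Dart) : ℝ × ℝ :=
  if d.2 then G.emb d.1 0 else G.emb d.1 (G.len d.1)

/-- Position in `Ω` of the head endpoint of the copy of a dart in the cell
`n = (n₁, n₂)` of the mesh `Γ^δ`. -/
noncomputable def meshHeadPos (δ : ℝ) {N₁ N₂ : ℕ} (n : Fin N₁ × Fin N₂)
    (d : G.Dart) : ℝ × ℝ :=
  δ • (G.embHead d + (((n.1 : ℕ) : ℝ), ((n.2 : ℕ) : ℝ)))

/-- Value of a mesh function at the head endpoint of the copy of a dart in
the cell `n` of `Γ^δ` (edges of `Γ^δ` have length `δ·len e`). -/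
def meshHeadVal (δ : ℝ) {N₁ N₂ : ℕ}
    (v : Fin N₁ × Fin N₂ → G.E → ℝ → ℝ) (n : Fin N₁ × Fin N₂) (d : G.Dart) : ℝ :=
  if d.2 then v n d.1 (δ * G.len d.1) else v n d.1 0

end CellGraph

/-! Integrating `∂_Γ v` along the copy of a dart in a cell gives the value of `v` at the head
minus the value at the tail. Summed over all cells, the head value of a dart of `C` cancels
against the tail value of the next dart: shifting the cell index by the integer translation
between the two embedded endpoints, taken modulo `(N₁, N₂)`, the two mesh points either coincide
or, when the shift wraps around, both lie on `∂Ω`, where `v` vanishes. The sum therefore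
telescopes around the closed circuit. -/

namespace List

variable {α M : Type*} [AddCommGroup M] {R : α → α → Prop} {f g : α → M}

theorem IsChain.sum_map_sub_cons (hfg : ∀ a b, R a b → f a = g b) {a : α} {l : List α}
    (hl : (a :: l).IsChain R) :
    ((a :: l).map fun x => f x - g x).sum = f ((a :: l).getLast (cons_ne_nil a l)) - g a := by
  induction l generalizing a with
  | nil => simp
  | cons b l ih =>
    rw [isChain_cons_cons] at hl
    rw [map_cons, sum_cons, ih hl.2, getLast_cons (cons_ne_nil b l), hfg a b hl.1]
    abel

theorem IsChain.sum_map_sub_eq_zero (hfg : ∀ a b, R a b → f a = g b) {l : List α}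
    (hl : l.IsChain R) (hclose : ∀ a ∈ l.getLast?, ∀ b ∈ l.head?, R a b) :
    (l.map fun x => f x - g x).sum = 0 := by
  cases l with
  | nil => simp
  | cons a l =>
    rw [hl.sum_map_sub_cons hfg, sub_eq_zero]
    exact hfg _ _ (hclose _ (by simp [getLast?_eq_some_getLast]) _ rfl)

theorem sum_map_finset_sum {ι : Type*} (s : Finset ι) (l : List α) (f : ι → α → M) :
    (l.map fun a => ∑ i ∈ s, f i a).sum = ∑ i ∈ s, (l.map (f i)).sum := by
  induction l <;> simp [*, Finset.sum_add_distrib]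

end List

theorem finRotate_apply_modEq {N : ℕ} (i : Fin N) :
    ((finRotate N i : ℕ) : ℤ) ≡ i + 1 [ZMOD N] := by
  have := i.neZero
  rw [finRotate_apply, Fin.val_add, Fin.val_one']
  simp [Int.ModEq, Int.emod_emod_of_dvd]

theorem finRotate_zpow_apply_modEq {N : ℕ} (k : ℤ) (i : Fin N) :
    (((finRotate N ^ k) i : ℕ) : ℤ) ≡ i + k [ZMOD N] := by
  induction k using Int.induction_on generalizing i with
  | zero => simp [Int.ModEq.refl]
  | succ k ih =>
    rw [zpow_add_one, Equiv.Perm.mul_apply]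
    calc _ ≡ ((finRotate N i : ℕ) : ℤ) + k [ZMOD N] := ih _
      _ ≡ i + 1 + k [ZMOD N] := (finRotate_apply_modEq i).add_right _
      _ = i + (k + 1) := by ring
  | pred k ih =>
    rw [zpow_sub_one, Equiv.Perm.mul_apply]
    have hinv := (finRotate_apply_modEq ((finRotate N)⁻¹ i)).symm
    rw [Equiv.Perm.inv_def, Equiv.apply_symm_apply] at hinv
    calc _ ≡ (((finRotate N)⁻¹ i : ℕ) : ℤ) + -k [ZMOD N] := ih _
      _ = (((finRotate N)⁻¹ i : ℕ) : ℤ) + 1 + (-k - 1) := by ring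
      _ ≡ i + (-k - 1) [ZMOD N] := hinv.add_right _

theorem eq_or_mem_frontier_Icc_of_sub_eq_mul {x y L : ℝ} (hx : x ∈ Set.Icc 0 L)
    (hy : y ∈ Set.Icc 0 L) {j : ℤ} (hxy : x - y = j * L) :
    x = y ∨ (x ∈ frontier (Set.Icc 0 L) ∧ y ∈ frontier (Set.Icc 0 L)) := by
  have hL : 0 ≤ L := hx.1.trans hx.2
  rw [frontier_Icc hL]
  obtain ⟨hx0, hxL⟩ := hx
  obtain ⟨hy0, hyL⟩ := hy
  rcases lt_trichotomy j 0 with hj | rfl | hj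
  · have : (j : ℝ) ≤ -1 := by exact_mod_cast Int.le_sub_one_of_lt hj
    have : x = 0 ∧ y = L := by constructor <;> nlinarith
    simp [this]
  · left; simpa [sub_eq_zero] using hxy
  · have : (1 : ℝ) ≤ j := by exact_mod_cast hj
    have : x = L ∧ y = 0 := by constructor <;> nlinarith
    simp [this]

theorem eq_or_mem_frontier_Icc_prod_of_sub_eq_mul {p q : ℝ × ℝ} {A B : ℝ}
    (hp : p ∈ Set.Icc 0 (A, B)) (hq : q ∈ Set.Icc 0 (A, B))
    (h₁ : ∃ j : ℤ, p.1 - q.1 = j * A) (h₂ : ∃ j : ℤ, p.2 - q.2 = j * B) :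
    p = q ∨ (p ∈ frontier (Set.Icc 0 (A, B)) ∧ q ∈ frontier (Set.Icc 0 (A, B))) := by
  obtain ⟨j₁, h₁⟩ := h₁
  obtain ⟨j₂, h₂⟩ := h₂
  rw [Set.Icc_prod_eq] at hp hq ⊢
  rw [frontier_prod_eq, closure_Icc, closure_Icc]
  rcases eq_or_mem_frontier_Icc_of_sub_eq_mul hp.1 hq.1 h₁ with e₁ | ⟨f₁p, f₁q⟩
  · rcases eq_or_mem_frontier_Icc_of_sub_eq_mul hp.2 hq.2 h₂ with e₂ | ⟨f₂p, f₂q⟩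
    · exact Or.inl (Prod.ext e₁ e₂)
    · exact Or.inr ⟨Or.inl ⟨hp.1, f₂p⟩, Or.inl ⟨hq.1, f₂q⟩⟩
  · exact Or.inr ⟨Or.inr ⟨f₁p, hp.2⟩, Or.inr ⟨f₁q, hq.2⟩⟩

theorem mul_add_natCast_mem_Icc {N : ℕ} {δ a : ℝ} (hδ : 0 ≤ δ) (ha : a ∈ Set.Icc 0 1)
    (n : Fin N) : δ * (a + (n : ℕ)) ∈ Set.Icc 0 (N * δ) := by
  have hn : ((n : ℕ) : ℝ) + 1 ≤ N := by exact_mod_cast n.isLt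
  constructor
  · have := ha.1; positivity
  · nlinarith [ha.2]

theorem exists_mul_add_sub_mul_add_eq {N : ℕ} {δ a b : ℝ} {k : ℤ} (hab : a = b + k)
    (n : Fin N) :
    ∃ j : ℤ, δ * (a + (n : ℕ)) - δ * (b + ((finRotate N ^ k) n : ℕ)) = j * (N * δ) := by
  obtain ⟨j, hj⟩ := (finRotate_zpow_apply_modEq k n).dvd
  have hj' : ((n : ℕ) : ℝ) + k - ((finRotate N ^ k) n : ℕ) = N * j := by exact_mod_cast hj
  exact ⟨j, by rw [hab]; linear_combination δ * hj'⟩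

namespace OrientedMetricGraph

variable (G : OrientedMetricGraph)

def dartRev (d : G.Dart) : G.Dart := (d.1, !d.2)

@[simp]
theorem dartHead_dartRev (d : G.Dart) : G.dartHead (G.dartRev d) = G.dartTail d := by
  obtain ⟨e, _ | _⟩ := d <;> rfl

end OrientedMetricGraph

namespace CellGraph

variable (G : CellGraph)

@[simp]
theorem embHead_dartRev (d : G.Dart) : G.embHead (G.dartRev d) = G.embTail d := by
  obtain ⟨e, _ | _⟩ := d <;> rfl

variable {G}

theorem embHead_mem_Icc
    (hemb : ∀ e : G.E, ∀ s ∈ Set.Icc (0:ℝ) (G.len e), G.emb e s ∈ Set.Icc 0 1) (d : G.Dart) :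
    G.embHead d ∈ Set.Icc 0 1 := by
  unfold embHead
  split
  · exact hemb _ _ ⟨(G.len_pos _).le, le_rfl⟩
  · exact hemb _ _ ⟨le_rfl, (G.len_pos _).le⟩

variable {δ : ℝ} {N₁ N₂ : ℕ}

theorem meshHeadPos_mem_Icc
    (hemb : ∀ e : G.E, ∀ s ∈ Set.Icc (0:ℝ) (G.len e), G.emb e s ∈ Set.Icc 0 1)
    (hδ : 0 ≤ δ) (n : Fin N₁ × Fin N₂) (d : G.Dart) :
    G.meshHeadPos δ n d ∈ Set.Icc 0 ((N₁ : ℝ) * δ, (N₂ : ℝ) * δ) := by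
  obtain ⟨h0, h1⟩ := embHead_mem_Icc hemb d
  rw [Set.Icc_prod_eq]
  exact ⟨mul_add_natCast_mem_Icc hδ ⟨h0.1, h1.1⟩ n.1, mul_add_natCast_mem_Icc hδ ⟨h0.2, h1.2⟩ n.2⟩

def cellShift (k : ℤ × ℤ) : Equiv.Perm (Fin N₁ × Fin N₂) :=
  (finRotate N₁ ^ k.1).prodCongr (finRotate N₂ ^ k.2)

theorem sign_mul_integral_eq_meshHeadVal_sub (hδ : 0 ≤ δ) (v v' : Fin N₁ × Fin N₂ → G.E → ℝ → ℝ)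
    (hrep : ∀ n e, ∀ σ ∈ Set.Icc (0:ℝ) (δ * G.len e),
      v n e σ = v n e 0 + ∫ t in (0:ℝ)..σ, v' n e t)
    (n : Fin N₁ × Fin N₂) (d : G.Dart) :
    G.sign d * ∫ σ in (0:ℝ)..(δ * G.len d.1), v' n d.1 σ
      = G.meshHeadVal δ v n d - G.meshHeadVal δ v n (G.dartRev d) := by
  have h := hrep n d.1 _ ⟨mul_nonneg hδ (G.len_pos d.1).le, le_rfl⟩
  obtain ⟨e, _ | _⟩ := d <;>
    simp [OrientedMetricGraph.sign, meshHeadVal, OrientedMetricGraph.dartRev, h]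

theorem sum_meshHeadVal_eq_sum_meshHeadVal_dartRev
    (hemb : ∀ e : G.E, ∀ s ∈ Set.Icc (0:ℝ) (G.len e), G.emb e s ∈ Set.Icc 0 1)
    (hδ : 0 ≤ δ) (v : Fin N₁ × Fin N₂ → G.E → ℝ → ℝ)
    (hconsist : ∀ (n₁ n₂ : Fin N₁ × Fin N₂) (d₁ d₂ : G.Dart),
      G.dartHead d₁ = G.dartHead d₂ →
      G.meshHeadPos δ n₁ d₁ = G.meshHeadPos δ n₂ d₂ →
      G.meshHeadVal δ v n₁ d₁ = G.meshHeadVal δ v n₂ d₂)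
    (hbdry : ∀ (n : Fin N₁ × Fin N₂) (d : G.Dart),
      G.meshHeadPos δ n d ∈ frontier (Set.Icc 0 ((N₁ : ℝ) * δ, (N₂ : ℝ) * δ)) →
      G.meshHeadVal δ v n d = 0)
    {d d' : G.Dart} (hdd' : G.dartHead d = G.dartTail d') {k : ℤ × ℤ}
    (hk : G.embHead d = G.embTail d' + ((k.1 : ℝ), (k.2 : ℝ))) :
    ∑ n, G.meshHeadVal δ v n d = ∑ n, G.meshHeadVal δ v n (G.dartRev d') := by
  refine Fintype.sum_equiv (cellShift k) _ _ fun n => ?_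
  have h₁ := exists_mul_add_sub_mul_add_eq (δ := δ) (congrArg Prod.fst hk) n.1
  have h₂ := exists_mul_add_sub_mul_add_eq (δ := δ) (congrArg Prod.snd hk) n.2
  rcases eq_or_mem_frontier_Icc_prod_of_sub_eq_mul (meshHeadPos_mem_Icc hemb hδ n d)
      (meshHeadPos_mem_Icc hemb hδ (cellShift k n) (G.dartRev d'))
      (by simpa [meshHeadPos, cellShift, mul_add] using h₁)
      (by simpa [meshHeadPos, cellShift, mul_add] using h₂) with hpos | ⟨hp, hq⟩
  · exact hconsist _ _ _ _ (by simpa using hdd') hpos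
  · rw [hbdry _ _ hp, hbdry _ _ hq]

end CellGraph

theorem mesh_circuit_integral_eq_zero_general (G : CellGraph)
    (hemb : ∀ e : G.E, ∀ s ∈ Set.Icc (0:ℝ) (G.len e),
      G.emb e s ∈ Set.Icc (((0:ℝ), (0:ℝ)) : ℝ × ℝ) ((1:ℝ), (1:ℝ)))
    (δ : ℝ) (hδ : 0 < δ) (N₁ N₂ : ℕ)
    (v v' : Fin N₁ × Fin N₂ → G.E → ℝ → ℝ)
    (hrep : ∀ n e, ∀ σ ∈ Set.Icc (0:ℝ) (δ * G.len e),
      v n e σ = v n e 0 + ∫ t in (0:ℝ)..σ, v' n e t)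
    -- `v` is continuous on the mesh: endpoint values agree at every common
    -- mesh point (same periodic vertex and same position in `Ω`).
    (hconsist : ∀ (n₁ n₂ : Fin N₁ × Fin N₂) (d₁ d₂ : G.Dart),
      G.dartHead d₁ = G.dartHead d₂ →
      G.meshHeadPos δ n₁ d₁ = G.meshHeadPos δ n₂ d₂ →
      G.meshHeadVal δ v n₁ d₁ = G.meshHeadVal δ v n₂ d₂)
    -- `v` vanishes at the boundary points `∂Γ^δ = Γ^δ ∩ ∂Ω`.
    (hbdry : ∀ (n : Fin N₁ × Fin N₂) (d : G.Dart),
      G.meshHeadPos δ n d ∈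
        frontier (Set.Icc (((0:ℝ), (0:ℝ)) : ℝ × ℝ) (((N₁:ℝ) * δ, (N₂:ℝ) * δ))) →
      G.meshHeadVal δ v n d = 0)
    (C : List G.Dart) (hC : G.IsCircuit C)
    -- `C` is a circuit of the *periodic* graph: embedded endpoints of
    -- consecutive darts agree up to integer translations.
    (hgeo : C.Chain' (fun d₁ d₂ => ∃ k : ℤ × ℤ,
      G.embHead d₁ = G.embTail d₂ + (((k.1 : ℤ) : ℝ), ((k.2 : ℤ) : ℝ))))
    (hgeoclose : ∀ dl ∈ C.getLast?, ∀ df ∈ C.head?, ∃ k : ℤ × ℤ,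
      G.embHead dl = G.embTail df + (((k.1 : ℤ) : ℝ), ((k.2 : ℤ) : ℝ))) :
    ∑ n : Fin N₁ × Fin N₂,
      (C.map fun d =>
        G.sign d * ∫ σ in (0:ℝ)..(δ * G.len d.1), v' n d.1 σ).sum = 0 := by
  obtain ⟨⟨-, hchain, -⟩, hclose⟩ := hC
  have hcircuit : C.IsChain fun d d' => G.dartHead d = G.dartTail d' ∧ ∃ k : ℤ × ℤ,
      G.embHead d = G.embTail d' + ((k.1 : ℝ), (k.2 : ℝ)) :=
    List.isChain_iff_getElem.2 fun i hi =>
      ⟨List.isChain_iff_getElem.1 hchain i hi, List.isChain_iff_getElem.1 hgeo i hi⟩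
  simp only [CellGraph.sign_mul_integral_eq_meshHeadVal_sub hδ.le v v' hrep,
    ← List.sum_map_finset_sum, Finset.sum_sub_distrib]
  refine hcircuit.sum_map_sub_eq_zero (fun d d' ⟨hdd', k, hk⟩ => ?_)
    fun a ha b hb => ⟨hclose a ha b hb, hgeoclose a ha b hb⟩
  exact CellGraph.sum_meshHeadVal_eq_sum_meshHeadVal_dartRev hemb hδ.le v hconsist hbdry hdd' hk

/-- Let `v ∈ H¹₀(Γ^δ)` (an `H¹` function on the mesh `Γ^δ`
filling `Ω = [0, N₁δ] × [0, N₂δ]`, vanishing at all boundary points of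
`Γ^δ` on `∂Ω`), and let `C` be a circuit of the periodic unit graph
`Γ'_{Y,♯}`. Then `∫_{Γ^δ} ∂_Γ v(x) χ_C(x/δ) ds(x) = 0`. -/
theorem mesh_circuit_integral_eq_zero (G : CellGraph)
    (hemb : ∀ e : G.E, ∀ s ∈ Set.Icc (0:ℝ) (G.len e),
      G.emb e s ∈ Set.Icc (((0:ℝ), (0:ℝ)) : ℝ × ℝ) ((1:ℝ), (1:ℝ)))
    (δ : ℝ) (hδ : 0 < δ) (N₁ N₂ : ℕ)
    (v v' : Fin N₁ × Fin N₂ → G.E → ℝ → ℝ)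
    (hrep : ∀ n e, ∀ σ ∈ Set.Icc (0:ℝ) (δ * G.len e),
      v n e σ = v n e 0 + ∫ t in (0:ℝ)..σ, v' n e t)
    (hint : ∀ n e, IntervalIntegrable (v' n e) MeasureTheory.volume 0 (δ * G.len e))
    -- `v` is continuous on the mesh: endpoint values agree at every common
    -- mesh point (same periodic vertex and same position in `Ω`).
    (hconsist : ∀ (n₁ n₂ : Fin N₁ × Fin N₂) (d₁ d₂ : G.Dart),
      G.dartHead d₁ = G.dartHead d₂ →
      G.meshHeadPos δ n₁ d₁ = G.meshHeadPos δ n₂ d₂ →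
      G.meshHeadVal δ v n₁ d₁ = G.meshHeadVal δ v n₂ d₂)
    -- `v` vanishes at the boundary points `∂Γ^δ = Γ^δ ∩ ∂Ω`.
    (hbdry : ∀ (n : Fin N₁ × Fin N₂) (d : G.Dart),
      G.meshHeadPos δ n d ∈
        frontier (Set.Icc (((0:ℝ), (0:ℝ)) : ℝ × ℝ) (((N₁:ℝ) * δ, (N₂:ℝ) * δ))) →
      G.meshHeadVal δ v n d = 0)
    (C : List G.Dart) (hC : G.IsCircuit C)
    -- `C` is a circuit of the *periodic* graph: embedded endpoints of
    -- consecutive darts agree up to integer translations.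
    (hgeo : C.Chain' (fun d₁ d₂ => ∃ k : ℤ × ℤ,
      G.embHead d₁ = G.embTail d₂ + (((k.1 : ℤ) : ℝ), ((k.2 : ℤ) : ℝ))))
    (hgeoclose : ∀ dl ∈ C.getLast?, ∀ df ∈ C.head?, ∃ k : ℤ × ℤ,
      G.embHead dl = G.embTail df + (((k.1 : ℤ) : ℝ), ((k.2 : ℤ) : ℝ))) :
    ∑ n : Fin N₁ × Fin N₂,
      (C.map fun d =>
        G.sign d * ∫ σ in (0:ℝ)..(δ * G.len d.1), v' n d.1 σ).sum = 0 :=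
  mesh_circuit_integral_eq_zero_general G hemb δ hδ N₁ N₂ v v' hrep hconsist hbdry C hC hgeo
    hgeoclose
end
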